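/- arXiv:1201.3699 — 6 statements merged into one kernel-verified Lean document; each statement's English description precedes it below -/
import Mathlib

section
/- For every two integers n and k with 2 ≤ k ≤ n, the generalized k-edge-connectivity of the complete graph K_n equals n − ⌈k/2⌉. -/
open SimpleGraph

/-- An `S`-Steiner tree in `G`: a subgraph of `G` that is a tree whose
vertex set contains `S`. -/
def SimpleGraph.IsSteinerTree {V : Type*} (G : SimpleGraph V) (S : Set V)
    (T : G.Subgraph) : Prop :=
  S ⊆ T.verts ∧ T.coe.IsTree

/-- The generalized local edge-connectivity `λ(S)`: the maximum number of
pairwise edge-disjoint `S`-Steiner trees in `G`. -/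
noncomputable def SimpleGraph.steinerLambda {V : Type*} (G : SimpleGraph V)
    (S : Set V) : ℕ :=
  sSup {n | ∃ T : Fin n → G.Subgraph, (∀ i, G.IsSteinerTree S (T i)) ∧
    ∀ i j, i ≠ j → Disjoint (T i).edgeSet (T j).edgeSet}

/-- The generalized `k`-edge-connectivity `λ_k(G)`:
the minimum of `λ(S)` over all `k`-element vertex subsets `S`. -/
noncomputable def SimpleGraph.genEdgeConn {V : Type*} (G : SimpleGraph V)
    (k : ℕ) : ℕ :=
  sInf {m | ∃ S : Set V, S.ncard = k ∧ G.steinerLambda S = m}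

/-!
Lower bound: every vertex `w ∉ S` gives the star joining `w` to `S`, and the complete graph on
`S` contains `⌊k/2⌋` edge-disjoint spanning double stars, which together make
`(n - k) + ⌊k/2⌋ = n - ⌈k/2⌉` edge-disjoint `S`-Steiner trees.

Upper bound: a Steiner tree with vertex set exactly `S` uses `k - 1` of the `C(k,2)` edges inside
`S`, so there are at most `⌊k/2⌋` of them, and any other Steiner tree uses at least `k` edges
meeting `S`. As `K_n` has `C(k,2) + k(n - k)` edges meeting `S`, `t` disjoint trees satisfy
`t k ≤ C(k,2) + k(n - k) + ⌊k/2⌋`, which forces `t ≤ n - ⌈k/2⌉`.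
-/

theorem le_add_half_of_mul_le {m k t p : ℕ} (hk : 2 ≤ k) (hp : p * (k - 1) ≤ k.choose 2)
    (ht : t * k ≤ k * m + k.choose 2 + p) : t ≤ m + k / 2 := by
  have hc : 2 * k.choose 2 = k * (k - 1) := by
    rw [Nat.choose_two_right]; exact Nat.mul_div_cancel' (Nat.even_mul_pred_self k).two_dvd
  have hp' : 2 * p ≤ k := by
    refine Nat.le_of_mul_le_mul_right (c := k - 1) ?_ (by omega)
    linarith
  by_contra! h
  obtain ⟨j, rfl | rfl⟩ := Nat.even_or_odd' k
  · have : 2 * j - 1 + 1 = 2 * j := by omega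
    rw [Nat.mul_div_cancel_left _ two_pos] at h
    nlinarith
  · rw [show (2 * j + 1) / 2 = j by omega] at h
    rw [show 2 * j + 1 - 1 = 2 * j by omega] at hc
    nlinarith

theorem Set.Finite.sum_ncard_le_ncard {ι α : Type*} {t : Set α} (ht : t.Finite) (u : Finset ι)
    {s : ι → Set α} (hs : ∀ i ∈ u, s i ⊆ t) (hd : (u : Set ι).PairwiseDisjoint s) :
    ∑ i ∈ u, (s i).ncard ≤ t.ncard := by
  rw [← finsum_mem_coe_finset, ← Set.Finite.ncard_biUnion u.finite_toSet
    (fun i hi => ht.subset (hs i hi)) hd]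
  exact Set.ncard_le_ncard (Set.iUnion₂_subset hs) ht

namespace SimpleGraph

variable {V W : Type*}

def IsSteinerPacking {ι : Type*} (G : SimpleGraph V) (S : Set V) (T : ι → G.Subgraph) : Prop :=
  (∀ i, G.IsSteinerTree S (T i)) ∧ Pairwise fun i j => Disjoint (T i).edgeSet (T j).edgeSet

theorem steinerLambda_eq {G : SimpleGraph V} {S : Set V} {m : ℕ}
    (hex : ∃ T : Fin m → G.Subgraph, G.IsSteinerPacking S T)
    (hle : ∀ t (T : Fin t → G.Subgraph), G.IsSteinerPacking S T → t ≤ m) :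
    G.steinerLambda S = m := by
  obtain ⟨T, hT, hdisj⟩ := hex
  exact IsGreatest.csSup_eq ⟨⟨T, hT, fun i j => @hdisj i j⟩,
    fun t ⟨T', hT', hdisj'⟩ => hle t T' ⟨hT', hdisj'⟩⟩

theorem Subgraph.isTree_coe_map {G : SimpleGraph V} {G' : SimpleGraph W} {H : G.Subgraph}
    (hH : H.coe.IsTree) (f : G ↪g G') : (H.map f.toHom).coe.IsTree := by
  refine (Iso.isTree_iff ?_).1 hH
  exact {
    toEquiv := Equiv.Set.image f H.verts f.injective
    map_rel_iff' := by
      rintro ⟨a, ha⟩ ⟨b, hb⟩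
      exact Relation.map_apply_apply f.injective f.injective _ a b }

namespace IsSteinerPacking

variable {ι κ : Type*} {G : SimpleGraph V} {S : Set V} {T : ι → G.Subgraph}

theorem comp (hT : G.IsSteinerPacking S T) {f : κ → ι} (hf : f.Injective) :
    G.IsSteinerPacking S (T ∘ f) :=
  ⟨fun i => hT.1 (f i), fun _ _ hij => hT.2 (hf.ne hij)⟩

theorem exists_fin [Finite ι] (hT : G.IsSteinerPacking S T) :
    ∃ T' : Fin (Nat.card ι) → G.Subgraph, G.IsSteinerPacking S T' :=
  ⟨T ∘ (Finite.equivFin ι).symm, hT.comp (Finite.equivFin ι).symm.injective⟩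

theorem sum_elim {T' : κ → G.Subgraph} (hT : G.IsSteinerPacking S T)
    (hT' : G.IsSteinerPacking S T') (h : ∀ i j, Disjoint (T i).edgeSet (T' j).edgeSet) :
    G.IsSteinerPacking S (Sum.elim T T') := by
  refine ⟨Sum.rec hT.1 hT'.1, ?_⟩
  rintro (i | i) (j | j) hij
  · exact hT.2 (ne_of_apply_ne _ hij)
  · exact h i j
  · exact (h j i).symm
  · exact hT'.2 (ne_of_apply_ne _ hij)

theorem map {G' : SimpleGraph W} (hT : G.IsSteinerPacking S T) (f : G ↪g G') :
    G'.IsSteinerPacking (f '' S) fun i => (T i).map f.toHom := by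
  refine ⟨fun i => ⟨Set.image_mono (hT.1 i).1, ?_⟩, fun i j hij => ?_⟩
  · exact Subgraph.isTree_coe_map (hT.1 i).2 f
  · simpa [Subgraph.edgeSet_map, Set.disjoint_image_iff (Sym2.map.injective f.injective)]
      using hT.2 hij

end IsSteinerPacking

theorem isTree_of_adj_iff_parent {G : SimpleGraph W} (r : W) (p : W → W)
    (hadj : ∀ x y, G.Adj x y ↔ (x ≠ r ∧ y = p x) ∨ (y ≠ r ∧ x = p y))
    (hpp : ∀ x, p (p x) = r) : G.IsTree := by
  have adj_parent : ∀ x, x ≠ r → G.Adj x (p x) := fun x hx => (hadj _ _).2 (.inl ⟨hx, rfl⟩)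
  have parent_ne : ∀ x, x ≠ r → p x ≠ x := fun x hx h => hx (by rw [← hpp x, h, h])
  refine ⟨(connected_iff G).2 ⟨fun u v => ?_, ⟨r⟩⟩, isAcyclic_iff_forall_adj_isBridge.2 ?_⟩
  · have reach_root : ∀ u, G.Reachable u r := by
      intro u
      by_cases hu : u = r
      · exact hu ▸ .rfl
      by_cases hpu : p u = r
      · exact hpu ▸ (adj_parent u hu).reachable
      · exact (adj_parent u hu).reachable.trans (hpp u ▸ (adj_parent _ hpu).reachable)
    exact (reach_root u).trans (reach_root v).symm
  -- `{x | x = v ∨ p x = v}` is the subtree below `v`; the only edge leaving it is `s(v, p v)`.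
  have crosses : ∀ v, v ≠ r → ∀ x y (q : G.Walk x y),
      (x = v ∨ p x = v) → ¬(y = v ∨ p y = v) → s(v, p v) ∈ q.edges := by
    intro v hv x y q
    induction q with
    | nil => exact absurd
    | @cons a b c hab q ih =>
      intro ha hc
      by_cases hb : b = v ∨ p b = v
      · exact List.mem_cons_of_mem _ (ih hb hc)
      have : s(a, b) = s(v, p v) := by
        rcases (hadj a b).1 hab with ⟨-, rfl⟩ | ⟨hbr, rfl⟩ <;> rcases ha with rfl | ha
        · rfl
        · exact absurd (.inl ha) hb
        · exact absurd (.inr rfl) hb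
        · exact absurd (ha ▸ hpp b) hv
      simp [this]
  intro x y hxy
  refine isBridge_iff_forall_walk_mem_edges.2 fun q => ?_
  have outside : ∀ v, v ≠ r → ¬(p v = v ∨ p (p v) = v) := fun v hv h =>
    h.elim (parent_ne v hv) fun h => hv ((hpp v).symm.trans h).symm
  rcases (hadj x y).1 hxy with ⟨hx, rfl⟩ | ⟨hy, rfl⟩
  · exact crosses x hx x _ q (.inl rfl) (outside x hx)
  · simpa [Sym2.eq_swap] using crosses y hy y _ q.reverse (.inl rfl) (outside y hy)

@[simps]
def Subgraph.ofParent (s : Set V) (r : V) (p : V → V) : (⊤ : SimpleGraph V).Subgraph where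
  verts := s
  Adj x y := x ∈ s ∧ y ∈ s ∧ x ≠ y ∧ ((x ≠ r ∧ y = p x) ∨ (y ≠ r ∧ x = p y))
  adj_sub h := h.2.2.1
  edge_vert h := h.1
  symm := ⟨fun _ _ h => ⟨h.2.1, h.1, h.2.2.1.symm, h.2.2.2.symm⟩⟩

theorem Subgraph.isTree_coe_ofParent {s : Set V} {r : V} {p : V → V} (hr : r ∈ s)
    (hp : ∀ x ∈ s, p x ∈ s) (hpp : ∀ x ∈ s, p (p x) = r) : (ofParent s r p).coe.IsTree := by
  have parent_ne : ∀ x ∈ s, x ≠ r → p x ≠ x := fun x hx hxr h => hxr (by rw [← hpp x hx, h, h])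
  refine isTree_of_adj_iff_parent (G := (ofParent s r p).coe) ⟨r, hr⟩ (fun x => ⟨p x, hp x x.2⟩)
    (fun ⟨x, hx⟩ ⟨y, hy⟩ => ?_) fun ⟨x, hx⟩ => Subtype.ext (hpp x hx)
  simp only [Subgraph.coe_adj, ofParent_adj, ne_eq, Subtype.ext_iff]
  constructor
  · exact fun h => h.2.2.2
  · rintro (⟨hxr, rfl⟩ | ⟨hyr, rfl⟩)
    · exact ⟨hx, hy, (parent_ne x hx hxr).symm, .inl ⟨hxr, rfl⟩⟩
    · exact ⟨hx, hy, parent_ne y hy hyr, .inr ⟨hyr, rfl⟩⟩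

def steinerStar (S : Set V) (w : V) : (⊤ : SimpleGraph V).Subgraph :=
  Subgraph.ofParent (insert w S) w fun _ => w

theorem mem_of_mem_edgeSet_steinerStar {S : Set V} {w : V} {e : Sym2 V}
    (he : e ∈ (steinerStar S w).edgeSet) : w ∈ e := by
  induction e using Sym2.ind with
  | _ x y => rcases he.2.2.2 with ⟨-, rfl⟩ | ⟨-, rfl⟩ <;> simp

theorem isSteinerPacking_steinerStar (S : Set V) :
    (⊤ : SimpleGraph V).IsSteinerPacking S fun w : ↥Sᶜ => steinerStar S w := by
  refine ⟨fun w => ⟨Set.subset_insert _ _, Subgraph.isTree_coe_ofParent (Set.mem_insert _ _)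
    (fun _ _ => Set.mem_insert _ _) fun _ _ => rfl⟩, fun ⟨w, hw⟩ ⟨w', hw'⟩ hne => ?_⟩
  refine Set.disjoint_left.2 fun e he he' => hne (Subtype.ext ?_)
  induction e using Sym2.ind with
  | _ x y =>
    obtain ⟨hx, hy, -, hxy⟩ := he
    obtain ⟨hx', hy', -, hxy'⟩ := he'
    grind

/-- Parent map of the `i`-th double star, with centres `2 * i` and `2 * i + 1` (the root).
A leaf below the centres hangs from the centre of its own parity and a leaf above them from the
other one; this is what makes the double stars for different `i` edge-disjoint. -/
def doubleStarParent (i a : ℕ) : ℕ :=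
  if a < 2 * i then 2 * i + a % 2
  else if a ≤ 2 * i + 1 then 2 * i + 1
  else 2 * i + (a + 1) % 2

theorem doubleStarParent_le (i a : ℕ) : doubleStarParent i a ≤ 2 * i + 1 := by
  unfold doubleStarParent; split_ifs <;> omega

theorem doubleStarParent_doubleStarParent (i a : ℕ) :
    doubleStarParent i (doubleStarParent i a) = 2 * i + 1 := by
  unfold doubleStarParent; split_ifs <;> omega

theorem doubleStarParent_edge_unique {i j a b : ℕ} (hij : i ≠ j)
    (hi : (a ≠ 2 * i + 1 ∧ b = doubleStarParent i a) ∨ (b ≠ 2 * i + 1 ∧ a = doubleStarParent i b))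
    (hj : (a ≠ 2 * j + 1 ∧ b = doubleStarParent j a) ∨ (b ≠ 2 * j + 1 ∧ a = doubleStarParent j b)) :
    False := by
  unfold doubleStarParent at hi hj
  split_ifs at hi hj <;> omega

def doubleStar (k : ℕ) (i : Fin (k / 2)) : (⊤ : SimpleGraph (Fin k)).Subgraph :=
  Subgraph.ofParent Set.univ ⟨2 * i + 1, by omega⟩
    fun a => ⟨doubleStarParent i a, (doubleStarParent_le i a).trans_lt (by omega)⟩

theorem isSteinerPacking_doubleStar (k : ℕ) :
    (⊤ : SimpleGraph (Fin k)).IsSteinerPacking Set.univ (doubleStar k) := by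
  refine ⟨fun i => ⟨subset_rfl, Subgraph.isTree_coe_ofParent (Set.mem_univ _)
    (fun _ _ => Set.mem_univ _) fun a _ => Fin.ext (doubleStarParent_doubleStarParent i a)⟩,
    fun i j hij => Set.disjoint_left.2 fun e he he' => ?_⟩
  induction e using Sym2.ind with
  | _ x y =>
    obtain ⟨-, -, -, hxy⟩ := he
    obtain ⟨-, -, -, hxy'⟩ := he'
    simp only [ne_eq, Fin.ext_iff] at hxy hxy'
    exact doubleStarParent_edge_unique (Fin.val_injective.ne hij) hxy hxy'

theorem exists_isSteinerPacking_top {S : Set V} (hS : S.Finite) :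
    ∃ T : ↥Sᶜ ⊕ Fin (S.ncard / 2) → (⊤ : SimpleGraph V).Subgraph,
      (⊤ : SimpleGraph V).IsSteinerPacking S T := by
  have := hS.to_subtype
  set e : Fin S.ncard ↪ V := ((finCongr (Nat.card_coe_set_eq S).symm).trans
    (Finite.equivFin S).symm).toEmbedding.trans (Function.Embedding.subtype _)
  have he : Set.range e = S := by
    simp only [e, Function.Embedding.coe_trans, Set.range_comp, Equiv.coe_toEmbedding,
      EquivLike.range_eq_univ, Set.image_univ, Function.Embedding.coe_subtype, Subtype.range_coe]
  have hD := (isSteinerPacking_doubleStar S.ncard).map (Embedding.completeGraph e)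
  simp only [Set.image_univ, Embedding.coe_completeGraph, he] at hD
  refine ⟨_, (isSteinerPacking_steinerStar S).sum_elim hD fun w i => ?_⟩
  refine Set.disjoint_left.2 fun x hx hx' => w.2 ?_
  obtain ⟨a, -, ha⟩ := Subgraph.mem_verts_of_mem_edge hx' (mem_of_mem_edgeSet_steinerStar hx)
  exact he.subset ⟨a, ha⟩

theorem Reachable.exists_adj_dist_lt {G : SimpleGraph W} {v r : W} (h : G.Reachable v r)
    (hne : v ≠ r) : ∃ w, G.Adj v w ∧ G.dist w r < G.dist v r := by
  obtain ⟨q, hq⟩ := h.exists_walk_length_eq_dist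
  have hq' : ¬q.Nil := Walk.not_nil_of_ne hne
  refine ⟨q.snd, q.adj_snd hq', ?_⟩
  calc G.dist q.snd r ≤ q.tail.length := dist_le _
    _ < q.length := by rw [← q.length_tail_add_one hq']; omega
    _ = G.dist v r := hq

/-- Sending each `v ∈ A` to the edge towards a neighbour closer to `r` is injective. -/
theorem Connected.ncard_le_ncard_edgeSet_inter [Finite W] {G : SimpleGraph W}
    (hG : G.Connected) {A : Set W} {r : W} (hr : r ∉ A) :
    A.ncard ≤ (G.edgeSet ∩ {e | ∃ v ∈ e, v ∈ A}).ncard := by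
  choose! par hpar using fun v (hv : v ≠ r) => (hG.preconnected v r).exists_adj_dist_lt hv
  have hne : ∀ v ∈ A, v ≠ r := fun v hv h => hr (h ▸ hv)
  refine Set.ncard_le_ncard_of_injOn (fun v => s(v, par v))
    (fun v hv => ⟨(hpar v (hne v hv)).1, v, Sym2.mem_mk_left _ _, hv⟩) ?_ (Set.toFinite _)
  intro u hu v hv huv
  rcases Sym2.eq_iff.1 huv with ⟨h, -⟩ | ⟨h₁, h₂⟩
  · exact h
  · have hu' := (hpar u (hne u hu)).2
    have hv' := (hpar v (hne v hv)).2
    rw [h₂] at hu'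
    rw [← h₁] at hv'
    omega

theorem Subgraph.ncard_le_ncard_edgeSet_inter [Finite V] {G : SimpleGraph V} {H : G.Subgraph}
    (hH : H.coe.Connected) {A : Set V} (hA : A ⊆ H.verts) {r : V} (hr : r ∈ H.verts)
    (hrA : r ∉ A) : A.ncard ≤ (H.edgeSet ∩ {e | ∃ v ∈ e, v ∈ A}).ncard := by
  set A' : Set H.verts := Subtype.val ⁻¹' A
  have hA' : A.ncard = A'.ncard :=
    (Set.ncard_preimage_of_injective_subset_range Subtype.val_injective (by simpa using hA)).symm
  have himage : Sym2.map Subtype.val '' (H.coe.edgeSet ∩ {e | ∃ v ∈ e, v ∈ A'}) ⊆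
      H.edgeSet ∩ {e | ∃ v ∈ e, v ∈ A} := by
    rintro _ ⟨e, ⟨he, v, hv, hvA⟩, rfl⟩
    exact ⟨H.image_coe_edgeSet_coe ▸ ⟨e, he, rfl⟩, v, Sym2.mem_map.2 ⟨v, hv, rfl⟩, hvA⟩
  calc A.ncard = A'.ncard := hA'
    _ ≤ (H.coe.edgeSet ∩ {e | ∃ v ∈ e, v ∈ A'}).ncard :=
      hH.ncard_le_ncard_edgeSet_inter (r := ⟨r, hr⟩) hrA
    _ = (Sym2.map Subtype.val '' (H.coe.edgeSet ∩ {e | ∃ v ∈ e, v ∈ A'})).ncard :=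
      (Set.ncard_image_of_injective _ (Sym2.map.injective Subtype.val_injective)).symm
    _ ≤ _ := Set.ncard_le_ncard himage (Set.toFinite _)

namespace IsSteinerTree

variable [Finite V] {G : SimpleGraph V} {S : Set V} {T : G.Subgraph}

theorem ncard_sub_one_le (hT : G.IsSteinerTree S T) (hS : S.Nonempty) :
    S.ncard - 1 ≤ (T.edgeSet ∩ {e | ∃ v ∈ e, v ∈ S}).ncard := by
  obtain ⟨r, hr⟩ := hS
  rw [← Set.ncard_sdiff_singleton_of_mem hr]
  refine (Subgraph.ncard_le_ncard_edgeSet_inter hT.2.connected (Set.sdiff_subset.trans hT.1)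
    (hT.1 hr) (by simp)).trans (Set.ncard_le_ncard ?_ (Set.toFinite _))
  exact Set.inter_subset_inter_right _ fun e ⟨v, hv, hvS⟩ => ⟨v, hv, hvS.1⟩

theorem ncard_le_of_not_subset (hT : G.IsSteinerTree S T) (h : ¬T.verts ⊆ S) :
    S.ncard ≤ (T.edgeSet ∩ {e | ∃ v ∈ e, v ∈ S}).ncard := by
  obtain ⟨w, hw, hwS⟩ := Set.not_subset.1 h
  exact Subgraph.ncard_le_ncard_edgeSet_inter hT.2.connected hT.1 hw hwS

end IsSteinerTree

/-- `p` counts the trees whose vertex set is exactly `S`. -/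
theorem IsSteinerPacking.exists_mul_le {ι : Type*} [Fintype ι] [Finite V] {G : SimpleGraph V}
    {S : Set V} {T : ι → G.Subgraph} (hT : G.IsSteinerPacking S T) (hS : S.Nonempty) :
    ∃ p, p * (S.ncard - 1) ≤ (G.edgeSet ∩ {e | ∀ v ∈ e, v ∈ S}).ncard ∧
      Fintype.card ι * S.ncard ≤ (G.edgeSet ∩ {e | ∃ v ∈ e, v ∈ S}).ncard + p := by
  classical
  set s : ι → Set (Sym2 V) := fun i => (T i).edgeSet ∩ {e | ∃ v ∈ e, v ∈ S}
  set P := Finset.univ.filter fun i => (T i).verts ⊆ S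
  have hd (u : Finset ι) : (u : Set ι).PairwiseDisjoint s := fun i _ j _ hij =>
    (hT.2 hij).mono Set.inter_subset_left Set.inter_subset_left
  have hpos : 0 < S.ncard := Set.ncard_pos (Set.toFinite _) |>.2 hS
  refine ⟨P.card, ?_, ?_⟩
  · calc P.card * (S.ncard - 1) ≤ ∑ i ∈ P, (s i).ncard :=
          P.card_nsmul_le_sum _ _ fun i _ => (hT.1 i).ncard_sub_one_le hS
      _ ≤ _ := by
          refine (Set.toFinite _).sum_ncard_le_ncard P (fun i hi e he => ?_) (hd P)
          exact ⟨(T i).edgeSet_subset he.1, fun v hv =>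
            (Finset.mem_filter.1 hi).2 ((T i).mem_verts_of_mem_edge he.1 hv)⟩
  · calc Fintype.card ι * S.ncard ≤ ∑ i, ((s i).ncard + if i ∈ P then 1 else 0) := by
          rw [← smul_eq_mul, ← Finset.card_univ]
          refine Finset.card_nsmul_le_sum _ _ _ fun i _ => ?_
          by_cases hi : i ∈ P
          · have : S.ncard - 1 ≤ (s i).ncard := (hT.1 i).ncard_sub_one_le hS
            simp only [hi, if_true]
            omega
          · simpa [hi] using (hT.1 i).ncard_le_of_not_subset (by simpa [P] using hi)
      _ = ∑ i, (s i).ncard + P.card := by simp [Finset.sum_add_distrib, P]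
      _ ≤ _ := by
          gcongr
          exact (Set.toFinite _).sum_ncard_le_ncard _
            (fun i _ => Set.inter_subset_inter_left _ (T i).edgeSet_subset) (hd _)

theorem ncard_edgeSet_top_inter_forall_mem (A : Set V) :
    ((⊤ : SimpleGraph V).edgeSet ∩ {e | ∀ v ∈ e, v ∈ A}).ncard = A.ncard.choose 2 := by
  rw [← Nat.card_coe_set_eq A, ← Sym2.ncard_diagSet_compl,
    ← Set.ncard_image_of_injective _ (Sym2.map.injective Subtype.val_injective)]
  congr 1
  ext e
  induction e using Sym2.ind with
  | _ x y =>
    constructor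
    · rintro ⟨hxy, h⟩
      exact ⟨s(⟨x, h x (Sym2.mem_mk_left _ _)⟩, ⟨y, h y (Sym2.mem_mk_right _ _)⟩),
        by simpa using hxy, rfl⟩
    · rintro ⟨e, he, h⟩
      induction e using Sym2.ind with
      | _ a b =>
        simp only [Sym2.map_mk, Sym2.eq_iff] at h
        rcases h with ⟨rfl, rfl⟩ | ⟨rfl, rfl⟩ <;> simpa [Subtype.ext_iff, eq_comm] using he

theorem ncard_edgeSet_top_inter_exists_mem [Finite V] (S : Set V) :
    ((⊤ : SimpleGraph V).edgeSet ∩ {e | ∃ v ∈ e, v ∈ S}).ncard =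
      S.ncard * Sᶜ.ncard + S.ncard.choose 2 := by
  have hsplit : (⊤ : SimpleGraph V).edgeSet ∩ {e | ∃ v ∈ e, v ∈ S} =
      (⊤ : SimpleGraph V).edgeSet \ ((⊤ : SimpleGraph V).edgeSet ∩ {e | ∀ v ∈ e, v ∈ Sᶜ}) := by
    ext e; simp
  have htop := ncard_edgeSet_top_inter_forall_mem (Set.univ : Set V)
  simp only [Set.mem_univ, implies_true, Set.ofPred_true, Set.inter_univ] at htop
  rw [hsplit, Set.ncard_sdiff Set.inter_subset_left, htop, ncard_edgeSet_top_inter_forall_mem,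
    Set.ncard_univ, ← Set.ncard_add_ncard_compl S]
  simp [Nat.add_choose_eq, Finset.Nat.antidiagonal_succ]

theorem steinerLambda_top [Finite V] {S : Set V} (hS : 2 ≤ S.ncard) :
    (⊤ : SimpleGraph V).steinerLambda S = Sᶜ.ncard + S.ncard / 2 := by
  refine steinerLambda_eq ?_ fun t T hT => ?_
  · obtain ⟨T, hT⟩ := exists_isSteinerPacking_top S.toFinite
    have hcard : Nat.card (↥Sᶜ ⊕ Fin (S.ncard / 2)) = Sᶜ.ncard + S.ncard / 2 := by
      rw [Nat.card_sum, Nat.card_coe_set_eq, Nat.card_fin]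
    exact hcard ▸ hT.exists_fin
  · obtain ⟨p, hp, ht⟩ := hT.exists_mul_le (Set.nonempty_of_ncard_ne_zero (by omega))
    rw [ncard_edgeSet_top_inter_forall_mem] at hp
    rw [ncard_edgeSet_top_inter_exists_mem, Fintype.card_fin] at ht
    exact le_add_half_of_mul_le hS hp ht

end SimpleGraph

theorem lambda_k_complete (n k : ℕ) (h2 : 2 ≤ k) (hk : k ≤ n) :
    (⊤ : SimpleGraph (Fin n)).genEdgeConn k = n - (k + 1) / 2 := by
  have hlambda : ∀ S : Set (Fin n), S.ncard = k →
      (⊤ : SimpleGraph (Fin n)).steinerLambda S = n - (k + 1) / 2 := by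
    intro S hS
    rw [steinerLambda_top (hS ▸ h2), Set.ncard_compl, hS, Nat.card_fin]
    omega
  obtain ⟨s, -, hs⟩ := Finset.exists_subset_card_eq (s := Finset.univ (α := Fin n)) (by simpa)
  have hS : (s : Set (Fin n)).ncard = k := by rw [Set.ncard_coe_finset, hs]
  have : {m | ∃ S : Set (Fin n), S.ncard = k ∧ (⊤ : SimpleGraph (Fin n)).steinerLambda S = m} =
      {n - (k + 1) / 2} :=
    Set.eq_singleton_iff_unique_mem.2
      ⟨⟨s, hS, hlambda s hS⟩, fun m ⟨S, hS, hm⟩ => hm ▸ hlambda S hS⟩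
  rw [genEdgeConn, this, csInf_singleton]
end

section
/- For any connected graph G and any integer k with 2 ≤ k ≤ |V(G)|, λ_k(G) ≤ δ(G), where δ(G) is the minimum degree of G. -/
/-
Every Steiner tree for a set `S` with at least two vertices must use an edge at each vertex
`v ∈ S`. Edge-disjoint trees use distinct such edges, so there are at most `deg v` of them.
Taking `v` of minimum degree and any `k`-set `S ∋ v` gives `λ_k(G) ≤ λ(S) ≤ δ(G)`.
-/

open SimpleGraph

namespace SimpleGraph

variable {V : Type*} {G : SimpleGraph V}

theorem Subgraph.exists_adj_of_preconnected {H : G.Subgraph} (hH : H.coe.Preconnected)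
    {u v : V} (hu : u ∈ H.verts) (hv : v ∈ H.verts) (huv : u ≠ v) : ∃ w, H.Adj v w := by
  have : Nontrivial H.verts := ⟨⟨⟨u, hu⟩, ⟨v, hv⟩, fun h ↦ huv (congrArg Subtype.val h)⟩⟩
  obtain ⟨w, hw⟩ := exists_adj_iff_not_isIsolated.mpr (hH.not_isIsolated ⟨v, hv⟩)
  exact ⟨w, hw⟩

theorem card_le_degree_of_pairwise_disjoint_edgeSet {ι : Type*} [Fintype ι] {v : V}
    [Fintype (G.neighborSet v)] (H : ι → G.Subgraph)
    (hdisj : Pairwise fun i j ↦ Disjoint (H i).edgeSet (H j).edgeSet)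
    (hadj : ∀ i, ∃ w, (H i).Adj v w) : Fintype.card ι ≤ G.degree v := by
  choose w hw using hadj
  have hinj : Function.Injective fun i ↦ (⟨w i, (H i).adj_sub (hw i)⟩ : G.neighborSet v) := by
    intro i j hij
    by_contra hne
    have hwj : s(v, w i) ∈ (H j).edgeSet := by
      rw [show w i = w j from congrArg Subtype.val hij]
      exact hw j
    exact Set.disjoint_left.mp (hdisj hne) (hw i) hwj
  simpa only [card_neighborSet_eq_degree] using Fintype.card_le_of_injective _ hinj

theorem steinerLambda_le_degree {S : Set V} {u v : V} (hu : u ∈ S) (hv : v ∈ S) (huv : u ≠ v)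
    [Fintype (G.neighborSet v)] : G.steinerLambda S ≤ G.degree v := by
  refine csSup_le' ?_
  rintro n ⟨T, hT, hdisj⟩
  simpa only [Fintype.card_fin] using G.card_le_degree_of_pairwise_disjoint_edgeSet T hdisj fun i ↦
    (T i).exists_adj_of_preconnected (hT i).2.connected.preconnected
      ((hT i).1 hu) ((hT i).1 hv) huv

end SimpleGraph

theorem lambda_k_le_minDegree_general {V : Type*} [Fintype V] (G : SimpleGraph V)
    [DecidableRel G.Adj] (k : ℕ) (h2 : 2 ≤ k)
    (hk : k ≤ Fintype.card V) :
    G.genEdgeConn k ≤ G.minDegree := by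
  have : Nonempty V := Fintype.card_pos_iff.mp (by omega)
  obtain ⟨v, hv⟩ := G.exists_minimal_degree_vertex
  obtain ⟨S, hvS, -, hS⟩ := Set.exists_subsuperset_card_eq (n := k)
    (Set.subset_univ {v}) (by rw [Set.ncard_singleton]; omega)
    (by rwa [Set.ncard_univ, Nat.card_eq_fintype_card])
  obtain ⟨u, huS, huv⟩ := Set.exists_ne_of_one_lt_ncard (s := S) (by omega) v
  calc G.genEdgeConn k ≤ G.steinerLambda S := Nat.sInf_le ⟨S, hS, rfl⟩
    _ ≤ G.degree v := G.steinerLambda_le_degree huS (hvS rfl) huv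
    _ = G.minDegree := hv.symm

theorem lambda_k_le_minDegree {V : Type*} [Fintype V] (G : SimpleGraph V)
    [DecidableRel G.Adj] (hG : G.Connected) (k : ℕ) (h2 : 2 ≤ k)
    (hk : k ≤ Fintype.card V) :
    G.genEdgeConn k ≤ G.minDegree :=
  lambda_k_le_minDegree_general G k h2 hk
end

section
/- Let G be a connected graph of order n and k an integer with 2 ≤ k ≤ n. Then 1 ≤ λ_k(G) ≤ n − ⌈k/2⌉. -/
open SimpleGraph

/-!
Let `S` have `k` vertices and let `T` be an `S`-Steiner tree; write `a` for the number of edges of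
`T` inside `S` and `b` for the number of edges of `T` between `S` and its complement. Then
`k * (k - 1) ≤ k * a + (k - 1) * b`: if `T` spans exactly `S` then `a = k - 1`, and otherwise the
edges of `T` missing `S` form a forest on the vertices of `T` outside `S`, so at least `k` edges of
`T` meet `S`. For `t` edge-disjoint Steiner trees the `a`'s add up to at most `k * (k - 1) / 2` and
the `b`'s to at most `k * (n - k)`, whence `2 * t + k ≤ 2 * n`. A spanning tree of `G` is an
`S`-Steiner tree for every `S`, which gives the lower bound.
-/

open Function

namespace Set

variable {α : Type*}

lemma sum_ncard_le_ncard_of_pairwise_disjoint {ι : Type*} [Fintype ι] {E : ι → Set α}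
    {X : Set α} (hX : X.Finite) (hd : Pairwise (Disjoint on E)) (hE : ∀ i, E i ⊆ X) :
    ∑ i, (E i).ncard ≤ X.ncard := by
  rw [← finsum_eq_sum_of_fintype, ← ncard_iUnion_of_finite (fun i ↦ hX.subset (hE i)) hd]
  exact ncard_le_ncard (iUnion_subset hE) hX

def crossingPairs (S : Set α) : Set (Sym2 α) := Sym2.mk.uncurry '' (S ×ˢ Sᶜ)

lemma ncard_crossingPairs_le [Finite α] (S : Set α) :
    S.crossingPairs.ncard ≤ S.ncard * (Nat.card α - S.ncard) := by
  rw [← ncard_compl S, ← ncard_prod]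
  exact ncard_image_le (toFinite _)

lemma two_mul_ncard_inter_sym2_le [Finite α] {E : Set (Sym2 α)} (hE : ∀ e ∈ E, ¬e.IsDiag)
    (S : Set α) : 2 * (E ∩ S.sym2).ncard ≤ S.ncard * (S.ncard - 1) := by
  classical
  set s := S.toFinite.toFinset
  have hsub : E ∩ S.sym2 ⊆ ↑(s.offDiag.image Sym2.mk.uncurry) := by
    rintro ⟨x, y⟩ ⟨he, hx, hy⟩
    simp only [Finset.coe_image, Finset.coe_offDiag, s, Finite.coe_toFinset]
    exact ⟨(x, y), ⟨hx, hy, hE _ he⟩, rfl⟩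
  calc 2 * (E ∩ S.sym2).ncard ≤ 2 * (s.offDiag.image Sym2.mk.uncurry).card := by
        grw [ncard_le_ncard hsub (Finset.finite_toSet _), ncard_coe_finset]
    _ = S.ncard * (S.ncard - 1) := by
        rw [Sym2.two_mul_card_image_offDiag, Finset.offDiag_card, Nat.mul_sub_one,
          ncard_eq_toFinset_card S]

end Set

namespace SimpleGraph

variable {V : Type*} {G : SimpleGraph V}

lemma IsAcyclic.card_edgeSet_add_one_le [Finite V] [Nonempty V] {H : SimpleGraph V}
    (hH : H.IsAcyclic) : Nat.card H.edgeSet + 1 ≤ Nat.card V := by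
  obtain ⟨F, hHF, -, hF⟩ := connected_top.exists_isTree_le_of_le_of_isAcyclic le_top hH
  rw [← (isTree_iff_connected_and_card.mp hF).2]
  gcongr
  exact Nat.card_mono (Set.toFinite _) (edgeSet_mono hHF)

namespace Subgraph

lemma card_edgeSet_coe (T : G.Subgraph) : Nat.card T.coe.edgeSet = T.edgeSet.ncard := by
  rw [← image_coe_edgeSet_coe, Set.ncard_image_of_injective _
    (Sym2.map.injective Subtype.val_injective), Nat.card_coe_set_eq]

lemma ncard_edgeSet_add_one_le_of_isAcyclic [Finite V] {T : G.Subgraph} (hT : T.coe.IsAcyclic)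
    (hne : T.verts.Nonempty) : T.edgeSet.ncard + 1 ≤ T.verts.ncard := by
  have : Nonempty T.verts := hne.to_subtype
  rw [← card_edgeSet_coe, ← Nat.card_coe_set_eq]
  exact hT.card_edgeSet_add_one_le

lemma ncard_edgeSet_add_one_of_isTree [Finite V] {T : G.Subgraph} (hT : T.coe.IsTree) :
    T.edgeSet.ncard + 1 = T.verts.ncard := by
  rw [← card_edgeSet_coe, ← Nat.card_coe_set_eq]
  exact (isTree_iff_connected_and_card.mp hT).2

lemma ncard_le_ncard_inter_sym2_add_ncard_inter_crossingPairs [Finite V] {T : G.Subgraph}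
    (hT : T.coe.IsTree) {A : Set V} (hA : A ⊆ T.verts) (hout : (T.verts \ A).Nonempty) :
    A.ncard ≤ (T.edgeSet ∩ A.sym2).ncard + (T.edgeSet ∩ A.crossingPairs).ncard := by
  set F := T.induce (T.verts \ A)
  have hFT : F ≤ T :=
    calc F ≤ T.induce T.verts := induce_mono_right Set.sdiff_subset
      _ = T := induce_self_verts
  have hF : F.edgeSet.ncard + 1 ≤ (T.verts \ A).ncard :=
    ncard_edgeSet_add_one_le_of_isAcyclic
      (hT.isAcyclic.comap (inclusion hFT) (inclusion.injective hFT)) hout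
  have hcover :
      T.edgeSet ⊆ (T.edgeSet ∩ A.sym2) ∪ (T.edgeSet ∩ A.crossingPairs) ∪ F.edgeSet := by
    rintro ⟨x, y⟩ he
    have hadj : T.Adj x y := he
    by_cases hx : x ∈ A <;> by_cases hy : y ∈ A
    · exact .inl (.inl ⟨he, hx, hy⟩)
    · exact .inl (.inr ⟨he, (x, y), ⟨hx, hy⟩, rfl⟩)
    · exact .inl (.inr ⟨he, (y, x), ⟨hy, hx⟩, Sym2.eq_swap⟩)
    · exact .inr ⟨⟨hadj.fst_mem, hx⟩, ⟨hadj.snd_mem, hy⟩, hadj⟩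
  have hE : T.edgeSet.ncard ≤
      (T.edgeSet ∩ A.sym2).ncard + (T.edgeSet ∩ A.crossingPairs).ncard + F.edgeSet.ncard := by
    grw [Set.ncard_le_ncard hcover, Set.ncard_union_le, Set.ncard_union_le]
  have hdiff : (T.verts \ A).ncard = T.verts.ncard - A.ncard := Set.ncard_sdiff hA
  have hAT : A.ncard ≤ T.verts.ncard := Set.ncard_le_ncard hA
  have hTcard := ncard_edgeSet_add_one_of_isTree hT
  omega

end Subgraph

lemma IsSteinerTree.ncard_mul_pred_le [Finite V] {S : Set V} {T : G.Subgraph}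
    (hT : G.IsSteinerTree S T) :
    S.ncard * (S.ncard - 1) ≤
      S.ncard * (T.edgeSet ∩ S.sym2).ncard +
        (S.ncard - 1) * (T.edgeSet ∩ S.crossingPairs).ncard := by
  obtain ⟨hS, htree⟩ := hT
  rcases (T.verts \ S).eq_empty_or_nonempty with hout | hout
  · have hW : T.verts = S := (Set.sdiff_eq_empty.mp hout).antisymm hS
    have hin : T.edgeSet ∩ S.sym2 = T.edgeSet := by
      refine Set.inter_eq_left.mpr ?_
      rintro ⟨x, y⟩ (hadj : T.Adj x y)
      exact ⟨hW ▸ hadj.fst_mem, hW ▸ hadj.snd_mem⟩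
    rw [hin, ← hW, ← Subgraph.ncard_edgeSet_add_one_of_isTree htree, Nat.add_sub_cancel]
    exact Nat.le_add_right _ _
  · have hk := Subgraph.ncard_le_ncard_inter_sym2_add_ncard_inter_crossingPairs htree hS hout
    set a := (T.edgeSet ∩ S.sym2).ncard
    set b := (T.edgeSet ∩ S.crossingPairs).ncard
    calc S.ncard * (S.ncard - 1) ≤ (a + b) * (S.ncard - 1) := Nat.mul_le_mul_right _ hk
      _ = (S.ncard - 1) * a + (S.ncard - 1) * b := by ring
      _ ≤ S.ncard * a + (S.ncard - 1) * b := by gcongr; omega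

lemma two_mul_add_ncard_le_of_isSteinerTree [Finite V] {S : Set V} (hS : 2 ≤ S.ncard) {t : ℕ}
    {T : Fin t → G.Subgraph} (hT : ∀ i, G.IsSteinerTree S (T i))
    (hd : ∀ i j, i ≠ j → Disjoint (T i).edgeSet (T j).edgeSet) :
    2 * t + S.ncard ≤ 2 * Nat.card V := by
  set k := S.ncard
  have hin : 2 * ∑ i, ((T i).edgeSet ∩ S.sym2).ncard ≤ k * (k - 1) := by
    grw [Set.sum_ncard_le_ncard_of_pairwise_disjoint (Set.toFinite (G.edgeSet ∩ S.sym2))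
      (fun i j hij ↦ (hd i j hij).mono Set.inter_subset_left Set.inter_subset_left)
      (fun i ↦ Set.inter_subset_inter_left _ (T i).edgeSet_subset)]
    exact Set.two_mul_ncard_inter_sym2_le (fun _ ↦ G.not_isDiag_of_mem_edgeSet) S
  have hcross : ∑ i, ((T i).edgeSet ∩ S.crossingPairs).ncard ≤ k * (Nat.card V - k) := by
    grw [Set.sum_ncard_le_ncard_of_pairwise_disjoint (Set.toFinite S.crossingPairs)
      (fun i j hij ↦ (hd i j hij).mono Set.inter_subset_left Set.inter_subset_left)
      (fun i ↦ Set.inter_subset_right), S.ncard_crossingPairs_le]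
  have hsum : t * (k * (k - 1)) ≤ k * ∑ i, ((T i).edgeSet ∩ S.sym2).ncard +
      (k - 1) * ∑ i, ((T i).edgeSet ∩ S.crossingPairs).ncard := by
    simpa only [Finset.mul_sum, Finset.sum_const, Finset.card_univ, Fintype.card_fin, smul_eq_mul,
      ← Finset.sum_add_distrib] using
      Finset.sum_le_sum fun i (_ : i ∈ Finset.univ) ↦ (hT i).ncard_mul_pred_le
  have hk : k ≤ Nat.card V := Set.ncard_le_card S
  refine Nat.le_of_mul_le_mul_right ?_ (Nat.mul_pos (by omega) (by omega) : 0 < k * (k - 1))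
  zify [hk, (by omega : 1 ≤ k)] at *
  nlinarith

lemma steinerLambda_le [Finite V] {S : Set V} (hS : 2 ≤ S.ncard) :
    G.steinerLambda S ≤ Nat.card V - (S.ncard + 1) / 2 :=
  csSup_le ⟨0, finZeroElim, finZeroElim, finZeroElim⟩ fun _ ⟨_, hT, hd⟩ ↦ by
    have := two_mul_add_ncard_le_of_isSteinerTree hS hT hd
    omega

lemma one_le_steinerLambda [Finite V] (hG : G.Connected) {S : Set V} (hS : 2 ≤ S.ncard) :
    1 ≤ G.steinerLambda S := by
  obtain ⟨H, hle, hH⟩ := hG.exists_isTree_le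
  set T := toSubgraph H hle
  have hT : G.IsSteinerTree S T :=
    ⟨fun v _ ↦ Set.mem_univ v,
      (T.spanningCoeEquivCoeOfSpanning (toSubgraph.isSpanning H hle)).isTree_iff.mp hH⟩
  -- boundedness matters: an unbounded set of naturals has `sSup = 0`
  refine le_csSup ⟨Nat.card V, fun _ ⟨_, hTs, hd⟩ ↦ ?_⟩
    ⟨fun _ ↦ T, fun _ ↦ hT, fun i j hij ↦ (hij (Subsingleton.elim i j)).elim⟩
  have := two_mul_add_ncard_le_of_isSteinerTree hS hTs hd
  omega

end SimpleGraph

theorem lambda_k_bounds {V : Type*} [Fintype V] (G : SimpleGraph V)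
    (hG : G.Connected) (n k : ℕ) (hn : Fintype.card V = n)
    (h2 : 2 ≤ k) (hk : k ≤ n) :
    1 ≤ G.genEdgeConn k ∧ G.genEdgeConn k ≤ n - (k + 1) / 2 := by
  rw [← Nat.card_eq_fintype_card] at hn
  subst hn
  obtain ⟨S₀, -, hS₀⟩ := Set.exists_subset_card_eq (s := Set.univ) (n := k)
    (by rwa [Set.ncard_univ])
  constructor
  · obtain ⟨S, hS, hS_eq⟩ : G.genEdgeConn k ∈ _ := Nat.sInf_mem ⟨_, S₀, hS₀, rfl⟩
    exact hS_eq ▸ one_le_steinerLambda hG (hS ▸ h2)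
  · calc G.genEdgeConn k ≤ G.steinerLambda S₀ := Nat.sInf_le ⟨S₀, hS₀, rfl⟩
      _ ≤ Nat.card V - (k + 1) / 2 := hS₀ ▸ steinerLambda_le (hS₀ ▸ h2)
end

section
/- Let G be a connected graph of order n and k an even integer with 2 ≤ k ≤ n. Then λ_k(G) = n − k/2 if and only if G = K_n. -/
open SimpleGraph

/-!
Write `k = 2m`. For a `k`-set `S`, an `S`-Steiner tree whose vertex set is exactly `S` has
`k - 1` edges, all inside `S`; any other `S`-Steiner tree has at least `k` edges meeting `S`,
because its edges avoiding `S` form a forest on its remaining vertices. As `G[S]` has at most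
`m (k - 1)` edges, at most `m` trees of the first kind are edge-disjoint, and counting the edges
meeting `S` (at most `m (k - 1)` inside `S`, at most `k (n - k)` leaving it) gives
`λ(S) ≤ n - m`, strictly if `S` contains a non-adjacent pair. In `Kₙ` the bound is attained:
the `n - k` stars joining a vertex outside `S` to `S` and the `m` zigzag Hamiltonian paths
decomposing `K_S` are edge-disjoint connected subgraphs containing `S`, and each of them contains
a spanning tree.
-/

open Function
open scoped Finset

lemma Finset.sum_ncard_le_ncard_of_pairwiseDisjoint {ι α : Type*} (s : Finset ι)
    {E : ι → Set α} {U : Set α} (hU : U.Finite) (hE : ∀ i ∈ s, E i ⊆ U)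
    (hd : (s : Set ι).PairwiseDisjoint E) : ∑ i ∈ s, (E i).ncard ≤ U.ncard := by
  rw [← finsum_mem_coe_finset,
    ← Set.Finite.ncard_biUnion s.finite_toSet (fun i hi ↦ hU.subset (hE i hi)) hd]
  exact Set.ncard_le_ncard (Set.iUnion₂_subset hE) hU

namespace SimpleGraph

variable {V : Type*} {G : SimpleGraph V} {S : Set V}

lemma IsAcyclic.card_edgeSet_lt [Finite V] [Nonempty V] (h : G.IsAcyclic) :
    Nat.card G.edgeSet < Nat.card V := by
  obtain ⟨T, hGT, -, hT⟩ := connected_top.exists_isTree_le_of_le_of_isAcyclic le_top h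
  have hT_card := (isTree_iff_connected_and_card.mp hT).2
  have := Nat.card_mono (Set.toFinite _) (edgeSet_mono hGT)
  omega

namespace Subgraph

lemma ncard_edgeSet_eq_card_coe (H : G.Subgraph) : H.edgeSet.ncard = Nat.card H.coe.edgeSet := by
  rw [← H.image_coe_edgeSet_coe,
    Set.ncard_image_of_injective _ (Sym2.map.injective Subtype.val_injective), Nat.card_coe_set_eq]

lemma ncard_edgeSet_add_one_of_isTree_s5 [Finite V] {H : G.Subgraph} (h : H.coe.IsTree) :
    H.edgeSet.ncard + 1 = H.verts.ncard := by
  rw [ncard_edgeSet_eq_card_coe, ← Nat.card_coe_set_eq]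
  exact (isTree_iff_connected_and_card.mp h).2

lemma edgeSet_subset_sym2_verts (H : G.Subgraph) : H.edgeSet ⊆ H.verts.sym2 := by
  intro e he
  induction e using Sym2.ind
  exact ⟨H.edge_vert he, H.edge_vert he.symm⟩

lemma edgeSet_induce (H : G.Subgraph) (s : Set V) : (H.induce s).edgeSet = H.edgeSet ∩ s.sym2 := by
  ext e
  induction e using Sym2.ind
  simp only [Subgraph.mem_edgeSet, induce_adj, Set.mem_inter_iff, Set.mk_mem_sym2_iff]
  tauto

lemma ncard_edgeSet_inter_sym2_lt [Finite V] {H : G.Subgraph} (h : H.coe.IsAcyclic) {s : Set V}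
    (hs : s ⊆ H.verts) (hne : s.Nonempty) : (H.edgeSet ∩ s.sym2).ncard < s.ncard := by
  have hle : H.induce s ≤ H := (induce_mono_right hs).trans_eq induce_self_verts
  have : Nonempty (H.induce s).verts := hne.to_subtype
  rw [← edgeSet_induce, ncard_edgeSet_eq_card_coe, ← Nat.card_coe_set_eq]
  exact (h.comap (inclusion hle) (inclusion.injective hle)).card_edgeSet_lt

lemma Connected.exists_isTree_le {H : G.Subgraph} (h : H.Connected) :
    ∃ T ≤ H, T.verts = H.verts ∧ T.coe.IsTree := by
  obtain ⟨F, hFH, hF⟩ := h.coe.exists_isTree_le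
  let T : G.Subgraph :=
    { verts := H.verts
      Adj v w := ∃ (hv : v ∈ H.verts) (hw : w ∈ H.verts), F.Adj ⟨v, hv⟩ ⟨w, hw⟩
      adj_sub := fun ⟨_, _, hvw⟩ ↦ H.adj_sub (hFH hvw)
      edge_vert := fun ⟨hv, _, _⟩ ↦ hv
      symm := ⟨fun _ _ ⟨hv, hw, hvw⟩ ↦ ⟨hw, hv, hvw.symm⟩⟩ }
  have hTF : T.coe = F := by
    ext ⟨v, hv⟩ ⟨w, hw⟩
    exact ⟨fun ⟨_, _, hvw⟩ ↦ hvw, fun hvw ↦ ⟨hv, hw, hvw⟩⟩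
  exact ⟨T, ⟨le_rfl, fun _ _ ⟨_, _, hvw⟩ ↦ hFH hvw⟩, rfl, hTF ▸ hF⟩

end Subgraph

def IsSteinerTreePacking (G : SimpleGraph V) (S : Set V) {ι : Type*} (T : ι → G.Subgraph) :
    Prop :=
  (∀ i, G.IsSteinerTree S (T i)) ∧ Pairwise (Disjoint on fun i ↦ (T i).edgeSet)

lemma steinerLambda_eq_sSup : G.steinerLambda S =
    sSup {t | ∃ T : Fin t → G.Subgraph, G.IsSteinerTreePacking S T} := rfl

lemma card_le_steinerLambda_of_connected {ι : Type*} [Finite ι] (F : ι → G.Subgraph)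
    (hF : ∀ i, (F i).Connected) (hS : ∀ i, S ⊆ (F i).verts)
    (hd : Pairwise (Disjoint on fun i ↦ (F i).edgeSet))
    (hbdd : BddAbove {t | ∃ T : Fin t → G.Subgraph, G.IsSteinerTreePacking S T}) :
    Nat.card ι ≤ G.steinerLambda S := by
  choose T hTF hTv hT using fun i ↦ (hF i).exists_isTree_le
  let e := Finite.equivFin ι
  refine le_csSup hbdd ⟨T ∘ e.symm, fun i ↦ ⟨(hS _).trans (hTv _).ge, hT _⟩, fun i j hij ↦ ?_⟩
  exact (hd (e.symm.injective.ne hij)).mono (Subgraph.edgeSet_mono (hTF _))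
    (Subgraph.edgeSet_mono (hTF _))

def starSubgraph (S : Set V) (w : V) : (⊤ : SimpleGraph V).Subgraph where
  verts := insert w S
  Adj x y := x ≠ y ∧ (x = w ∧ y ∈ S ∨ y = w ∧ x ∈ S)
  adj_sub h := h.1
  edge_vert := by
    rintro _ _ ⟨-, ⟨rfl, -⟩ | ⟨-, hx⟩⟩
    exacts [Set.mem_insert _ _, Set.mem_insert_of_mem _ hx]
  symm := ⟨fun _ _ ⟨hne, h⟩ ↦ ⟨hne.symm, h.symm⟩⟩

lemma starSubgraph_connected (S : Set V) (w : V) : (starSubgraph S w).Connected := by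
  rw [Subgraph.connected_iff', connected_iff_exists_forall_reachable]
  refine ⟨⟨w, Set.mem_insert w S⟩, fun ⟨x, hx⟩ ↦ ?_⟩
  by_cases hxw : x = w
  · subst hxw
    rfl
  · exact Adj.reachable ⟨Ne.symm hxw, .inl ⟨rfl, hx.resolve_left hxw⟩⟩

lemma disjoint_edgeSet_starSubgraph {w : V} {H : (⊤ : SimpleGraph V).Subgraph}
    (hw : w ∉ H.verts) : Disjoint (starSubgraph S w).edgeSet H.edgeSet := by
  refine Set.disjoint_left.mpr fun e he heH ↦ hw ?_
  induction e using Sym2.ind with | _ x y => ?_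
  obtain ⟨-, ⟨rfl, -⟩ | ⟨rfl, -⟩⟩ := he
  exacts [H.edge_vert heH, H.edge_vert heH.symm]

/-- The zigzag path `i, i + 1, i - 1, i + 2, …` through `ZMod n`, transported along `f`: its edges
are the pairs `{a, b}` with `a + b ∈ {2i, 2i + 1}`. For `n = 2m` the paths with `i < m` decompose
the complete graph. -/
def zigzagSubgraph {n : ℕ} (f : ZMod n → V) (i : ℕ) : (⊤ : SimpleGraph V).Subgraph where
  verts := Set.range f
  Adj x y := x ≠ y ∧ ∃ a b, f a = x ∧ f b = y ∧ (a + b).val / 2 = i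
  adj_sub h := h.1
  edge_vert := by
    rintro _ _ ⟨-, a, -, rfl, -⟩
    exact ⟨a, rfl⟩
  symm := ⟨fun _ _ ⟨hne, a, b, ha, hb, h⟩ ↦ ⟨hne.symm, b, a, hb, ha, by rwa [add_comm]⟩⟩

lemma zigzagSubgraph_connected {n : ℕ} [NeZero n] (f : ZMod n → V) {i : ℕ} (hi : 2 * i + 1 < n) :
    (zigzagSubgraph f i).Connected := by
  set H := zigzagSubgraph f i
  let vert (a : ZMod n) : H.verts := ⟨f a, a, rfl⟩
  have step {a b : ZMod n} (hab : (a + b).val / 2 = i) : H.coe.Reachable (vert a) (vert b) := by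
    by_cases h : f a = f b
    · rw [show vert a = vert b from Subtype.ext h]
    · exact Adj.reachable ⟨h, a, b, rfl, rfl, hab⟩
  have key (j : ℕ) :
      H.coe.Reachable (vert i) (vert (i + j)) ∧ H.coe.Reachable (vert i) (vert (i - j)) := by
    induction j with
    | zero => simp
    | succ j ih =>
      have h₁ : H.coe.Reachable (vert (i - j)) (vert (i + (j + 1 : ℕ))) := step <| by
        rw [show (i - j + (i + (j + 1 : ℕ)) : ZMod n) = (2 * i + 1 : ℕ) by push_cast; ring,
          ZMod.val_natCast_of_lt hi]
        omega
      have h₂ : H.coe.Reachable (vert (i + (j + 1 : ℕ))) (vert (i - (j + 1 : ℕ))) := step <| by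
        rw [show (i + (j + 1 : ℕ) + (i - (j + 1 : ℕ)) : ZMod n) = (2 * i : ℕ) by push_cast; ring,
          ZMod.val_natCast_of_lt (by omega)]
        omega
      exact ⟨ih.2.trans h₁, ih.2.trans (h₁.trans h₂)⟩
  rw [Subgraph.connected_iff', connected_iff_exists_forall_reachable]
  refine ⟨vert i, ?_⟩
  rintro ⟨_, a, rfl⟩
  simpa [vert] using (key (a - i).val).1

lemma disjoint_edgeSet_zigzagSubgraph {n : ℕ} {f : ZMod n → V} (hf : f.Injective) {i j : ℕ}
    (hij : i ≠ j) : Disjoint (zigzagSubgraph f i).edgeSet (zigzagSubgraph f j).edgeSet := by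
  refine Set.disjoint_left.mpr fun e hi hj ↦ ?_
  induction e using Sym2.ind with | _ x y => ?_
  obtain ⟨-, a, b, rfl, rfl, hab⟩ := hi
  obtain ⟨-, a', b', ha, hb, hab'⟩ := hj
  rw [hf ha, hf hb] at hab'
  exact hij (hab.symm.trans hab')

section Finite

variable [Finite V]

-- `T.edgeSet \ Sᶜ.sym2` is the set of edges of `T` meeting `S`.
lemma IsSteinerTree.ncard_le_ncard_edgeSet_sdiff_sym2_compl {T : G.Subgraph}
    (h : G.IsSteinerTree S T) :
    S.ncard ≤ (T.edgeSet \ Sᶜ.sym2).ncard + if T.verts = S then 1 else 0 := by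
  set A := T.verts \ S
  have hverts : A.ncard + S.ncard = T.verts.ncard := Set.ncard_sdiff_add_ncard_of_subset h.1
  have hedges : (T.edgeSet ∩ Sᶜ.sym2).ncard + (T.edgeSet \ Sᶜ.sym2).ncard = T.edgeSet.ncard :=
    Set.ncard_inter_add_ncard_sdiff_eq_ncard _ _
  have hinner : (T.edgeSet ∩ Sᶜ.sym2).ncard ≤ (T.edgeSet ∩ A.sym2).ncard := by
    refine Set.ncard_le_ncard (fun e ⟨he, heS⟩ ↦ ⟨he, ?_⟩)
    rw [show A = T.verts ∩ Sᶜ from Set.sdiff_eq _ _, Set.sym2_inter]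
    exact ⟨T.edgeSet_subset_sym2_verts he, heS⟩
  have htree := Subgraph.ncard_edgeSet_add_one_of_isTree_s5 h.2
  split_ifs with hTS
  · have hA : A = ∅ := by simp [A, hTS]
    simp only [hA, Set.sym2_empty, Set.inter_empty, Set.ncard_empty] at hinner
    omega
  · have hA : A.Nonempty := Set.sdiff_nonempty.mpr fun hTS' ↦ hTS (hTS'.antisymm h.1)
    have := Subgraph.ncard_edgeSet_inter_sym2_lt (s := A) h.2.isAcyclic Set.sdiff_subset hA
    omega

lemma ncard_edgeSet_top_inter_sym2 :
    ((⊤ : SimpleGraph V).edgeSet ∩ S.sym2).ncard = S.ncard.choose 2 := by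
  classical
  lift S to Finset V using S.toFinite
  rw [Set.ncard_coe_finset, ← Sym2.card_image_offDiag, ← Set.ncard_coe_finset]
  congr 1
  ext e
  induction e using Sym2.ind with | _ x y => ?_
  simp only [Set.mem_inter_iff, mem_edgeSet, top_adj, Set.mk_mem_sym2_iff, Finset.mem_coe,
    Finset.coe_image, Finset.coe_offDiag, Set.mem_image, Set.mem_offDiag, Prod.exists,
    Function.uncurry_apply_pair, Sym2.eq_iff]
  grind

lemma ncard_edgeSet_inter_sym2_le : (G.edgeSet ∩ S.sym2).ncard ≤ S.ncard.choose 2 :=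
  ncard_edgeSet_top_inter_sym2 (V := V) ▸
    Set.ncard_le_ncard (Set.inter_subset_inter_left _ (edgeSet_mono le_top))

lemma ncard_edgeSet_inter_sym2_lt {u v : V} (hu : u ∈ S) (hv : v ∈ S) (huv : u ≠ v)
    (h : ¬ G.Adj u v) : (G.edgeSet ∩ S.sym2).ncard < S.ncard.choose 2 := by
  rw [← ncard_edgeSet_top_inter_sym2]
  exact Set.ncard_lt_ncard ⟨Set.inter_subset_inter_left _ (edgeSet_mono le_top),
    fun hsub ↦ h (hsub (show s(u, v) ∈ _ from ⟨huv, hu, hv⟩)).1⟩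

lemma ncard_edgeSet_sdiff_sym2_compl_le :
    (G.edgeSet \ Sᶜ.sym2).ncard ≤ (G.edgeSet ∩ S.sym2).ncard + S.ncard * Sᶜ.ncard := by
  calc (G.edgeSet \ Sᶜ.sym2).ncard
      ≤ (G.edgeSet ∩ S.sym2 ∪ uncurry Sym2.mk '' S ×ˢ Sᶜ).ncard := by
        refine Set.ncard_le_ncard ?_ (Set.toFinite _)
        rintro e ⟨he, heS⟩
        induction e using Sym2.ind with | _ x y => ?_
        by_cases hx : x ∈ S <;> by_cases hy : y ∈ S
        · exact .inl ⟨he, hx, hy⟩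
        · exact .inr ⟨(x, y), ⟨hx, hy⟩, rfl⟩
        · exact .inr ⟨(y, x), ⟨hy, hx⟩, Sym2.eq_swap⟩
        · exact absurd ⟨hx, hy⟩ heS
    _ ≤ _ := by
      grw [Set.ncard_union_le, Set.ncard_image_le, Set.ncard_prod]

namespace IsSteinerTreePacking

variable {ι : Type*} [Fintype ι] {T : ι → G.Subgraph}

open Classical in
lemma card_mul_le (hT : G.IsSteinerTreePacking S T) :
    Fintype.card ι * S.ncard ≤
      (G.edgeSet \ Sᶜ.sym2).ncard + #{i | (T i).verts = S} := by
  calc Fintype.card ι * S.ncard = ∑ _ : ι, S.ncard := by simp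
    _ ≤ ∑ i, ((T i).edgeSet \ Sᶜ.sym2).ncard + ∑ i, if (T i).verts = S then 1 else 0 := by
      rw [← Finset.sum_add_distrib]
      exact Finset.sum_le_sum fun i _ ↦ (hT.1 i).ncard_le_ncard_edgeSet_sdiff_sym2_compl
    _ ≤ (G.edgeSet \ Sᶜ.sym2).ncard + #{i | (T i).verts = S} := by
      rw [Finset.sum_boole, Nat.cast_id]
      refine Nat.add_le_add_right (Finset.sum_ncard_le_ncard_of_pairwiseDisjoint _
        (Set.toFinite _) (fun i _ ↦ Set.sdiff_subset_sdiff_left (T i).edgeSet_subset) ?_) _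
      exact fun i _ j _ hij ↦ (hT.2 hij).mono Set.sdiff_subset Set.sdiff_subset

open Classical in
lemma card_filter_mul_le (hT : G.IsSteinerTreePacking S T) :
    #{i | (T i).verts = S} * (S.ncard - 1) ≤ (G.edgeSet ∩ S.sym2).ncard := by
  calc #{i | (T i).verts = S} * (S.ncard - 1)
      = ∑ i with (T i).verts = S, (T i).edgeSet.ncard := by
        rw [Finset.card_eq_sum_ones, Finset.sum_mul, one_mul]
        refine Finset.sum_congr rfl fun i hi ↦ ?_
        have := Subgraph.ncard_edgeSet_add_one_of_isTree_s5 (hT.1 i).2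
        rw [(Finset.mem_filter.mp hi).2] at this
        omega
    _ ≤ (G.edgeSet ∩ S.sym2).ncard := by
      refine Finset.sum_ncard_le_ncard_of_pairwiseDisjoint _ (Set.toFinite _) (fun i hi ↦ ?_)
        fun i _ j _ hij ↦ hT.2 hij
      rw [← (Finset.mem_filter.mp hi).2]
      exact Set.subset_inter (T i).edgeSet_subset (T i).edgeSet_subset_sym2_verts

lemma card_add_le {m δ : ℕ} (hT : G.IsSteinerTreePacking S T) (hm : 0 < m)
    (hS : S.ncard = 2 * m) (hδ : δ ≤ 1)
    (hG : (G.edgeSet ∩ S.sym2).ncard + δ ≤ (2 * m).choose 2) :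
    Fintype.card ι + δ ≤ Nat.card V - m := by
  classical
  have h_meet := hT.card_mul_le
  have h_inside := hT.card_filter_mul_le
  have h_cross := ncard_edgeSet_sdiff_sym2_compl_le (G := G) (S := S)
  obtain ⟨d, hd⟩ : ∃ d, Nat.card V = 2 * m + d :=
    ⟨_, (Nat.add_sub_of_le (hS ▸ Set.ncard_le_card S)).symm⟩
  have h_choose : (2 * m).choose 2 = m * (2 * m - 1) := by
    rw [Nat.choose_two_right, Nat.mul_assoc, Nat.mul_div_cancel_left _ two_pos]
  rw [Set.ncard_compl, hS, hd, Nat.add_sub_cancel_left] at h_cross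
  rw [hS] at h_meet h_inside
  rw [h_choose] at hG
  rw [hd, show 2 * m + d - m = m + d by omega]
  obtain ⟨c, hc⟩ : ∃ c, 2 * m - 1 = c := ⟨_, rfl⟩
  rw [hc] at h_inside hG
  have hc' : 2 * m = c + 1 := by omega
  have hx : #{i | (T i).verts = S} + δ ≤ m := by
    interval_cases δ <;> nlinarith
  interval_cases δ <;> nlinarith

end IsSteinerTreePacking

lemma steinerLambda_add_le {m δ : ℕ} (hm : 0 < m) (hS : S.ncard = 2 * m) (hδ : δ ≤ 1)
    (hG : (G.edgeSet ∩ S.sym2).ncard + δ ≤ (2 * m).choose 2) :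
    G.steinerLambda S + δ ≤ Nat.card V - m := by
  have h_bound : ∀ t ∈ {t | ∃ T : Fin t → G.Subgraph, G.IsSteinerTreePacking S T},
      t + δ ≤ Nat.card V - m := by
    rintro t ⟨T, hT⟩
    simpa using hT.card_add_le hm hS hδ hG
  have h_empty : 0 ∈ {t | ∃ T : Fin t → G.Subgraph, G.IsSteinerTreePacking S T} :=
    ⟨Fin.elim0, fun i ↦ i.elim0, fun i ↦ i.elim0⟩
  have h_sSup := csSup_le ⟨0, h_empty⟩ fun t ht ↦ Nat.le_sub_of_add_le (h_bound t ht)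
  have h_zero := h_bound 0 h_empty
  rw [steinerLambda_eq_sSup]
  omega

lemma bddAbove_setOf_isSteinerTreePacking {m : ℕ} (hm : 0 < m) (hS : S.ncard = 2 * m) :
    BddAbove {t | ∃ T : Fin t → G.Subgraph, G.IsSteinerTreePacking S T} :=
  ⟨Nat.card V - m, fun t ⟨T, hT⟩ ↦ by
    simpa using hT.card_add_le (δ := 0) hm hS zero_le_one (hS ▸ ncard_edgeSet_inter_sym2_le)⟩

lemma steinerLambda_top_s5 {m : ℕ} (hm : 0 < m) (hS : S.ncard = 2 * m) :
    (⊤ : SimpleGraph V).steinerLambda S = Nat.card V - m := by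
  have h_upper := steinerLambda_add_le (δ := 0) hm hS zero_le_one
    (hS ▸ ncard_edgeSet_inter_sym2_le (G := ⊤))
  refine le_antisymm h_upper ?_
  have : NeZero (2 * m) := ⟨by omega⟩
  obtain ⟨e⟩ : Nonempty (ZMod (2 * m) ≃ S) :=
    Finite.card_eq.mp (by rw [Nat.card_zmod, Nat.card_coe_set_eq, hS])
  let f : ZMod (2 * m) → V := Subtype.val ∘ e
  have hf : f.Injective := Subtype.val_injective.comp e.injective
  have hfS : Set.range f = S := by simp [f, Set.range_comp, e.range_eq_univ]
  let F : (↥Sᶜ ⊕ Fin m) → (⊤ : SimpleGraph V).Subgraph :=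
    Sum.elim (fun w ↦ starSubgraph S w) (fun i ↦ zigzagSubgraph f i)
  have hcard : Nat.card (↥Sᶜ ⊕ Fin m) = Nat.card V - m := by
    have := hS ▸ Set.ncard_le_card S
    rw [Nat.card_sum, Nat.card_coe_set_eq, Set.ncard_compl, hS, Nat.card_fin]
    omega
  rw [← hcard]
  refine card_le_steinerLambda_of_connected F ?_ ?_ ?_
    (bddAbove_setOf_isSteinerTreePacking hm hS)
  · rintro (w | i)
    exacts [starSubgraph_connected S w, zigzagSubgraph_connected f (by omega)]
  · rintro (w | i)
    exacts [Set.subset_insert _ S, hfS.ge]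
  · rintro (w | i) (w' | i') hne <;> simp only [onFun, F, Sum.elim_inl, Sum.elim_inr]
    · refine disjoint_edgeSet_starSubgraph ?_
      rintro (h | h)
      exacts [hne (congrArg _ (Subtype.ext h)), w.2 h]
    · exact disjoint_edgeSet_starSubgraph fun h ↦ w.2 (hfS.subset h)
    · exact (disjoint_edgeSet_starSubgraph fun h ↦ w'.2 (hfS.subset h)).symm
    · exact disjoint_edgeSet_zigzagSubgraph hf fun h ↦ hne (congrArg _ (Fin.ext h))

lemma genEdgeConn_top {m : ℕ} (hm : 0 < m) (hmV : 2 * m ≤ Nat.card V) :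
    (⊤ : SimpleGraph V).genEdgeConn (2 * m) = Nat.card V - m := by
  obtain ⟨S, -, hS⟩ :=
    Set.exists_subset_card_eq (s := Set.univ) (n := 2 * m) (by rwa [Set.ncard_univ])
  refine le_antisymm (Nat.sInf_le ⟨S, hS, steinerLambda_top_s5 hm hS⟩) ?_
  refine le_csInf ⟨_, S, hS, rfl⟩ ?_
  rintro _ ⟨S', hS', rfl⟩
  exact (steinerLambda_top_s5 hm hS').ge

end Finite

end SimpleGraph

theorem lambda_k_eq_max_iff_complete_even_general {V : Type*} [Fintype V]
    (G : SimpleGraph V) (n k : ℕ) (hn : Fintype.card V = n)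
    (h2 : 2 ≤ k) (hk : k ≤ n) (hke : Even k) :
    G.genEdgeConn k = n - k / 2 ↔ G = ⊤ := by
  obtain ⟨m, rfl⟩ := hke
  rw [← Nat.card_eq_fintype_card] at hn
  subst hn
  rw [← two_mul] at hk ⊢
  rw [Nat.mul_div_cancel_left m two_pos]
  have hm : 0 < m := by omega
  refine ⟨fun h ↦ ?_, fun h ↦ h ▸ genEdgeConn_top hm hk⟩
  by_contra hne
  obtain ⟨u, v, huv, hnadj⟩ := ne_top_iff_exists_not_adj.mp hne
  obtain ⟨S, huvS, -, hS⟩ := Set.exists_subsuperset_card_eq (n := 2 * m)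
    (Set.subset_univ {u, v}) (by rw [Set.ncard_pair huv]; omega) (by rwa [Set.ncard_univ])
  have h_lt := G.steinerLambda_add_le hm hS le_rfl
    (hS ▸ ncard_edgeSet_inter_sym2_lt (huvS (by simp)) (huvS (by simp)) huv hnadj)
  have h_le : G.genEdgeConn (2 * m) ≤ G.steinerLambda S := Nat.sInf_le ⟨S, hS, rfl⟩
  omega

theorem lambda_k_eq_max_iff_complete_even {V : Type*} [Fintype V]
    (G : SimpleGraph V) (hG : G.Connected) (n k : ℕ) (hn : Fintype.card V = n)
    (h2 : 2 ≤ k) (hk : k ≤ n) (hke : Even k) :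
    G.genEdgeConn k = n - k / 2 ↔ G = ⊤ :=
  lambda_k_eq_max_iff_complete_even_general G n k hn h2 hk hke
end

section
/- If G is a connected graph of order n with λ_3(G) = n − 3, then the complement of G has at most one connected component with more than 2 vertices. -/
open SimpleGraph

/-! If `Gᶜ` had two components with more than two vertices, choose `u` in one and `v` in the
other, each with two `Gᶜ`-neighbours. Then `u` and `v` are adjacent in `G` and both have
`G`-degree at most `n - 3`, so at most `2n - 7` edges of `G` meet `{u, v}`. For a
`Gᶜ`-neighbour `w` of `v`, every Steiner tree for `{u, v, w}` contains two of these edges,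
hence `λ({u, v, w}) ≤ n - 4 < n - 3`. -/

open Finset

namespace SimpleGraph

variable {V : Type*} {H : SimpleGraph V} {u v w : V}

theorem Reachable.exists_adj_adj_ne_of_not_adj (h : H.Reachable u v) (huv : u ≠ v)
    (hnadj : ¬H.Adj u v) : ∃ x y, H.Adj u x ∧ H.Adj x y ∧ y ≠ u := by
  obtain ⟨p, hp⟩ := h.exists_isPath
  cases p with
  | nil => exact absurd rfl huv
  | cons hux q =>
    rw [Walk.cons_isPath_iff] at hp
    cases q with
    | nil => exact absurd hux hnadj
    | cons hxy r =>
      exact ⟨_, _, hux, hxy, fun hyu => hp.2 (by simp [← hyu])⟩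

theorem ConnectedComponent.exists_adj_adj_of_two_lt_ncard_supp {c : H.ConnectedComponent}
    (hc : 2 < c.supp.ncard) : ∃ x ∈ c.supp, ∃ a b, a ≠ b ∧ H.Adj x a ∧ H.Adj x b := by
  obtain ⟨x, hx, y, hy, z, hz, hxy, hxz, hyz⟩ :=
    (Set.two_lt_ncard (Set.finite_of_ncard_pos (by omega))).mp hc
  have of_not_adj : ∀ y ∈ c.supp, x ≠ y → ¬H.Adj x y →
      ∃ x ∈ c.supp, ∃ a b, a ≠ b ∧ H.Adj x a ∧ H.Adj x b := by
    intro y hy hxy hnadj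
    obtain ⟨a, b, hxa, hab, hbx⟩ :=
      (c.reachable_of_mem_supp hx hy).exists_adj_adj_ne_of_not_adj hxy hnadj
    exact ⟨a, c.mem_supp_of_adj_mem_supp hx hxa, x, b, hbx.symm, hxa.symm, hab⟩
  by_cases hxy' : H.Adj x y
  · by_cases hxz' : H.Adj x z
    · exact ⟨x, hx, y, z, hyz, hxy', hxz'⟩
    · exact of_not_adj z hz hxz hxz'
  · exact of_not_adj y hy hxy hxy'

theorem adj_of_mem_supp_compl_of_ne {c d : Hᶜ.ConnectedComponent} (hcd : c ≠ d)
    (hu : u ∈ c.supp) (hv : v ∈ d.supp) : H.Adj u v := by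
  have hnreach : ¬Hᶜ.Reachable u v := fun huv =>
    hcd (by rw [← hu, ← hv]; exact ConnectedComponent.sound huv)
  by_contra hnadj
  exact hnreach (Adj.reachable ((compl_adj H u v).mpr ⟨fun h => hnreach (h ▸ .rfl), hnadj⟩))

theorem Connected.exists_ne_edges_incident (hH : H.Connected) (huv : u ≠ v) (hwu : w ≠ u)
    (hwv : w ≠ v) :
    ∃ e₁ ∈ H.edgeSet, ∃ e₂ ∈ H.edgeSet, e₁ ≠ e₂ ∧ (u ∈ e₁ ∨ v ∈ e₁) ∧ (u ∈ e₂ ∨ v ∈ e₂) := by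
  have incident : ∀ x, x ≠ w → ∃ e ∈ H.edgeSet, x ∈ e := fun x hx =>
    let ⟨y, hy⟩ := (hH x w).nonempty_neighborSet_left hx
    ⟨s(x, y), hy, Sym2.mem_mk_left x y⟩
  obtain ⟨d, -, hd, hd'⟩ :=
    (hH u w).some.exists_boundary_dart {u, v} (by simp) (by simp [hwu, hwv])
  -- `d.edge` leaves `{u, v}`, so it contains only one of `u`, `v`; an edge at the other one differs
  simp only [Set.mem_insert_iff, Set.mem_singleton_iff, not_or] at hd hd'
  rcases hd with hd | hd
  · obtain ⟨e, he, hve⟩ := incident v hwv.symm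
    refine ⟨d.edge, d.edge_mem, e, he, ?_, Or.inl (by simp [Dart.edge, hd]), Or.inr hve⟩
    rintro rfl
    simp only [Dart.edge, hd, Sym2.mem_iff, huv.symm, false_or] at hve
    exact hd'.2 hve.symm
  · obtain ⟨e, he, hue⟩ := incident u hwu.symm
    refine ⟨d.edge, d.edge_mem, e, he, ?_, Or.inr (by simp [Dart.edge, hd]), Or.inl hue⟩
    rintro rfl
    simp only [Dart.edge, hd, Sym2.mem_iff, huv, false_or] at hue
    exact hd'.1 hue.symm

theorem Subgraph.Connected.exists_ne_edges_incident {G : SimpleGraph V} {T : G.Subgraph}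
    (hT : T.Connected) (hu : u ∈ T.verts) (hv : v ∈ T.verts) (hw : w ∈ T.verts) (huv : u ≠ v)
    (hwu : w ≠ u) (hwv : w ≠ v) :
    ∃ e₁ ∈ T.edgeSet, ∃ e₂ ∈ T.edgeSet, e₁ ≠ e₂ ∧ (u ∈ e₁ ∨ v ∈ e₁) ∧ (u ∈ e₂ ∨ v ∈ e₂) := by
  obtain ⟨e₁, he₁, e₂, he₂, hne, h₁, h₂⟩ :=
    hT.coe.exists_ne_edges_incident (u := ⟨u, hu⟩) (v := ⟨v, hv⟩) (w := ⟨w, hw⟩)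
      (by simpa using huv) (by simpa using hwu) (by simpa using hwv)
  have mem_map : ∀ {x : T.verts} {e : Sym2 T.verts}, x ∈ e → x.1 ∈ e.map (↑) :=
    fun hx => Sym2.mem_map.mpr ⟨_, hx, rfl⟩
  exact ⟨_, by simpa using he₁, _, by simpa using he₂,
    (Sym2.map.injective Subtype.val_injective).ne hne, h₁.imp mem_map mem_map,
    h₂.imp mem_map mem_map⟩

variable [Fintype V] [DecidableEq V] [DecidableRel H.Adj]

theorem card_incidenceFinset_union_add_one (h : H.Adj u v) :
    #(H.incidenceFinset u ∪ H.incidenceFinset v) + 1 = H.degree u + H.degree v := by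
  have hinter : H.incidenceFinset u ∩ H.incidenceFinset v = {s(u, v)} := by
    rw [← coe_inj, coe_inter, coe_incidenceFinset, coe_incidenceFinset,
      H.incidenceSet_inter_incidenceSet_of_adj h, coe_singleton]
  rw [← card_singleton s(u, v), ← hinter, card_union_add_card_inter,
    card_incidenceFinset_eq_degree, card_incidenceFinset_eq_degree]

theorem degree_add_three_le_of_compl_adj {a b : V} (hab : a ≠ b) (ha : Hᶜ.Adj u a)
    (hb : Hᶜ.Adj u b) : H.degree u + 3 ≤ Fintype.card V := by
  have h2 : 2 ≤ Hᶜ.degree u := by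
    rw [← card_neighborFinset_eq_degree, ← card_pair hab]
    exact card_le_card (by simp [insert_subset_iff, ha, hb])
  have := H.degree_lt_card_verts u
  rw [degree_compl] at h2
  omega

theorem two_mul_le_card_incidenceFinset_union_of_isSteinerTree {m : ℕ} {T : Fin m → H.Subgraph}
    (hT : ∀ i, H.IsSteinerTree {u, v, w} (T i))
    (hdisj : ∀ i j, i ≠ j → Disjoint (T i).edgeSet (T j).edgeSet) (huv : u ≠ v) (hwu : w ≠ u)
    (hwv : w ≠ v) : 2 * m ≤ #(H.incidenceFinset u ∪ H.incidenceFinset v) := by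
  classical
  set E := H.incidenceFinset u ∪ H.incidenceFinset v
  set F : Fin m → Finset (Sym2 V) := fun i => E.filter (· ∈ (T i).edgeSet)
  have two_le_card : ∀ i, 2 ≤ #(F i) := fun i => by
    obtain ⟨hS, htree⟩ := hT i
    obtain ⟨e₁, he₁, e₂, he₂, hne, h₁, h₂⟩ :=
      Subgraph.Connected.exists_ne_edges_incident ⟨htree.connected⟩ (hS (by simp))
        (hS (by simp)) (hS (by simp)) huv hwu hwv
    have mem_F : ∀ e ∈ (T i).edgeSet, u ∈ e ∨ v ∈ e → e ∈ F i := fun e he hinc => by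
      have heH := (T i).edgeSet_subset he
      simp only [F, E, mem_filter, mem_union, mem_incidenceFinset]
      exact ⟨hinc.imp (⟨heH, ·⟩) (⟨heH, ·⟩), he⟩
    exact one_lt_card.mpr ⟨e₁, mem_F e₁ he₁ h₁, e₂, mem_F e₂ he₂ h₂, hne⟩
  have hFdisj : ((univ : Finset (Fin m)) : Set (Fin m)).PairwiseDisjoint F := fun i _ j _ hij =>
    disjoint_filter_filter' _ _ (hdisj i j hij)
  calc 2 * m = ∑ _i : Fin m, 2 := by simp [mul_comm]
    _ ≤ ∑ i, #(F i) := sum_le_sum fun i _ => two_le_card i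
    _ = #(univ.biUnion F) := (card_biUnion hFdisj).symm
    _ ≤ #E := card_le_card (biUnion_subset.mpr fun i _ => filter_subset _ _)

theorem two_mul_steinerLambda_le (huv : u ≠ v) (hwu : w ≠ u) (hwv : w ≠ v) :
    2 * H.steinerLambda {u, v, w} ≤ #(H.incidenceFinset u ∪ H.incidenceFinset v) := by
  have : H.steinerLambda {u, v, w} ≤ #(H.incidenceFinset u ∪ H.incidenceFinset v) / 2 :=
    csSup_le' fun m ⟨_, hT, hdisj⟩ => by
      have := two_mul_le_card_incidenceFinset_union_of_isSteinerTree hT hdisj huv hwu hwv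
      omega
  omega

end SimpleGraph

theorem compl_at_most_one_big_component_general {V : Type*} [Fintype V]
    (G : SimpleGraph V) (n : ℕ) (hn : Fintype.card V = n)
    (h : G.genEdgeConn 3 = n - 3) :
    ∀ c d : Gᶜ.ConnectedComponent,
      2 < c.supp.ncard → 2 < d.supp.ncard → c = d := by
  classical
  intro c d hc hd
  by_contra hcd
  obtain ⟨u, hu, a, a', haa', hua, hua'⟩ := c.exists_adj_adj_of_two_lt_ncard_supp hc
  obtain ⟨v, hv, b, b', hbb', hvb, hvb'⟩ := d.exists_adj_adj_of_two_lt_ncard_supp hd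
  have huv : G.Adj u v := adj_of_mem_supp_compl_of_ne hcd hu hv
  have hbu : b ≠ u := by
    rintro rfl
    exact ((compl_adj G v b).mp hvb).2 huv.symm
  have hS : ({u, v, b} : Set V).ncard = 3 :=
    Set.ncard_eq_three.mpr ⟨u, v, b, huv.ne, hbu.symm, hvb.ne, rfl⟩
  have hgen : G.genEdgeConn 3 ≤ G.steinerLambda {u, v, b} := Nat.sInf_le ⟨_, hS, rfl⟩
  have hlam := two_mul_steinerLambda_le (H := G) huv.ne hbu hvb.ne.symm
  have hcard := card_incidenceFinset_union_add_one huv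
  have hdeg_u := degree_add_three_le_of_compl_adj haa' hua hua'
  have hdeg_v := degree_add_three_le_of_compl_adj hbb' hvb hvb'
  omega

theorem compl_at_most_one_big_component {V : Type*} [Fintype V]
    (G : SimpleGraph V) (n : ℕ) (hn : Fintype.card V = n) (hG : G.Connected)
    (h : G.genEdgeConn 3 = n - 3) :
    ∀ c d : Gᶜ.ConnectedComponent,
      2 < c.supp.ncard → 2 < d.supp.ncard → c = d :=
  compl_at_most_one_big_component_general G n hn h
end

section
/- If G is a connected graph of order n with λ_3(G) = n − 3, then no component of the complement of G is a path on 5 or more vertices, nor a cycle on 4 or more vertices. -/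
open SimpleGraph

/-!
A path component of `Gᶜ` on at least five vertices, or a cycle component on at least four, has
three consecutive vertices `a - b - c` of `Gᶜ`-degree two; they have degree `n - 3` in `G`, and
`ac` is an edge of `G`. Every tree of a family of edge-disjoint trees
containing `{a, b, c}` uses a `G`-edge at each of `a`, `b`, `c`. If one of them uses `ac`, it
needs a second edge at `a` or `c` to reach `b`, so `3N + 1 ≤ 3(n - 3)`; otherwise each tree uses
an edge at `a` other than `ac`, so `N ≤ n - 4`. Hence `λ({a, b, c}) ≤ n - 4 < λ₃(G)`.
-/

open Finset

namespace SimpleGraph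

variable {V W : Type*}

section

variable {G : SimpleGraph V}

lemma Subgraph.Preconnected.exists_boundary_adj {T : G.Subgraph} (hT : T.Preconnected)
    {S : Set V} {u v : V} (hu : u ∈ T.verts) (hv : v ∈ T.verts) (huS : u ∈ S) (hvS : v ∉ S) :
    ∃ x ∈ S, ∃ y ∉ S, T.Adj x y := by
  obtain ⟨p⟩ := hT ⟨u, hu⟩ ⟨v, hv⟩
  obtain ⟨d, -, hx, hy⟩ := p.exists_boundary_dart {x | x.1 ∈ S} huS hvS
  exact ⟨_, hx, _, hy, d.adj⟩

namespace IsSteinerTree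

variable {S : Set V} {T : G.Subgraph}

lemma preconnected (hT : G.IsSteinerTree S T) : T.Preconnected :=
  ⟨hT.2.connected.preconnected⟩

lemma exists_adj (hT : G.IsSteinerTree S T) {u v : V} (hu : u ∈ S) (hv : v ∈ S) (huv : u ≠ v) :
    ∃ w, T.Adj u w := by
  obtain ⟨x, rfl, y, -, hxy⟩ :=
    hT.preconnected.exists_boundary_adj (S := {u}) (hT.1 hu) (hT.1 hv) rfl huv.symm
  exact ⟨y, hxy⟩

lemma exists_adj_ne_or_exists_adj_ne (hT : G.IsSteinerTree S T) {a b c : V} (ha : a ∈ S) (hb : b ∈ S)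
    (hba : b ≠ a) (hbc : b ≠ c) : (∃ w ≠ c, T.Adj a w) ∨ ∃ w ≠ a, T.Adj c w := by
  obtain ⟨x, hx, y, hy, hxy⟩ := hT.preconnected.exists_boundary_adj (S := {a, c})
    (hT.1 ha) (hT.1 hb) (by simp) (by simp [hba, hbc])
  simp only [Set.mem_insert_iff, Set.mem_singleton_iff, not_or] at hx hy
  rcases hx with rfl | rfl
  · exact Or.inl ⟨y, hy.2, hxy⟩
  · exact Or.inr ⟨y, hy.1, hxy⟩

end IsSteinerTree

lemma genEdgeConn_le_steinerLambda {k : ℕ} {S : Set V} (hS : S.ncard = k) :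
    G.genEdgeConn k ≤ G.steinerLambda S :=
  Nat.sInf_le ⟨S, hS, rfl⟩

lemma sum_card_filter_adj_le_card {ι : Type*} [Fintype ι] {T : ι → G.Subgraph}
    (hT : Pairwise fun i j => Disjoint (T i).edgeSet (T j).edgeSet) (v : V) (s : Finset V)
    [∀ i, DecidablePred ((T i).Adj v)] : ∑ i, #{w ∈ s | (T i).Adj v w} ≤ #s := by
  classical
  rw [← card_biUnion]
  · exact card_le_card (biUnion_subset.2 fun i _ => filter_subset _ _)
  · intro i _ j _ hij
    change Disjoint _ _
    refine Finset.disjoint_left.2 fun w hwi hwj => ?_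
    exact Set.disjoint_left.1 (hT hij) (Subgraph.mem_edgeSet.2 (mem_filter.1 hwi).2)
      (Subgraph.mem_edgeSet.2 (mem_filter.1 hwj).2)

end

section

variable {G : SimpleGraph V} [Fintype V] [DecidableRel G.Adj]
  {ι : Type*} [Fintype ι] {S : Set V} {T : ι → G.Subgraph} {a b c : V}

lemma card_lt_degree_of_steinerTrees_of_not_adj (hab : a ≠ b) (ha : a ∈ S) (hb : b ∈ S)
    (hadj : G.Adj a c) (hT : ∀ i, G.IsSteinerTree S (T i))
    (hdisj : Pairwise fun i j => Disjoint (T i).edgeSet (T j).edgeSet)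
    (hnadj : ∀ i, ¬(T i).Adj a c) : Fintype.card ι < G.degree a := by
  classical
  have pos (i : ι) : 0 < #{w ∈ (G.neighborFinset a).erase c | (T i).Adj a w} := by
    obtain ⟨w, hw⟩ := (hT i).exists_adj ha hb hab
    refine card_pos.2 ⟨w, mem_filter.2 ⟨mem_erase.2 ⟨?_, ?_⟩, hw⟩⟩
    · rintro rfl
      exact hnadj i hw
    · exact (mem_neighborFinset _ _ _).2 hw.adj_sub
  have hle := sum_card_filter_adj_le_card hdisj a ((G.neighborFinset a).erase c)
  rw [card_erase_of_mem ((mem_neighborFinset _ _ _).2 hadj), card_neighborFinset_eq_degree]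
    at hle
  have hcard : Fintype.card ι ≤ ∑ i, #{w ∈ (G.neighborFinset a).erase c | (T i).Adj a w} :=
    calc Fintype.card ι = ∑ _i : ι, 1 := by simp
      _ ≤ _ := sum_le_sum fun i _ => pos i
  have := (G.degree_pos_iff_exists_adj a).2 ⟨c, hadj⟩
  omega

lemma three_mul_card_lt_of_steinerTrees_of_adj (hab : a ≠ b) (hbc : b ≠ c) (hac : a ≠ c)
    (ha : a ∈ S) (hb : b ∈ S) (hc : c ∈ S) (hT : ∀ i, G.IsSteinerTree S (T i))
    (hdisj : Pairwise fun i j => Disjoint (T i).edgeSet (T j).edgeSet)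
    {j : ι} (hj : (T j).Adj a c) :
    3 * Fintype.card ι < G.degree a + G.degree b + G.degree c := by
  classical
  let f : ι → V → ℕ := fun i v => #{w ∈ G.neighborFinset v | (T i).Adj v w}
  have mem {i v w} (h : (T i).Adj v w) : w ∈ {w ∈ G.neighborFinset v | (T i).Adj v w} :=
    mem_filter.2 ⟨(mem_neighborFinset _ _ _).2 h.adj_sub, h⟩
  have pos {i v w} (h : (T i).Adj v w) : 0 < f i v := card_pos.2 ⟨w, mem h⟩
  have three (i : ι) : 3 ≤ f i a + f i b + f i c := by
    obtain ⟨_, hwa⟩ := (hT i).exists_adj ha hb hab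
    obtain ⟨_, hwb⟩ := (hT i).exists_adj hb ha hab.symm
    obtain ⟨_, hwc⟩ := (hT i).exists_adj hc ha hac.symm
    have := pos hwa; have := pos hwb; have := pos hwc
    omega
  -- the tree through the edge `ac` also has an edge leaving `{a, c}`
  have four : 3 < f j a + f j b + f j c := by
    obtain ⟨_, hwb⟩ := (hT j).exists_adj hb ha hab.symm
    have := pos hj; have := pos hj.symm; have := pos hwb
    rcases (hT j).exists_adj_ne_or_exists_adj_ne ha hb hab.symm hbc with ⟨w, hw, haw⟩ | ⟨w, hw, hcw⟩
    · have : 1 < f j a := one_lt_card.2 ⟨c, mem hj, w, mem haw, hw.symm⟩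
      omega
    · have : 1 < f j c := one_lt_card.2 ⟨a, mem hj.symm, w, mem hcw, hw.symm⟩
      omega
  have hsum : ∑ i, 3 < ∑ i, (f i a + f i b + f i c) :=
    sum_lt_sum (fun i _ => three i) ⟨j, mem_univ j, four⟩
  have hdeg (v : V) : ∑ i, f i v ≤ G.degree v := by
    simpa only [card_neighborFinset_eq_degree] using
      sum_card_filter_adj_le_card hdisj v (G.neighborFinset v)
  simp only [sum_add_distrib, sum_const, card_univ, smul_eq_mul] at hsum
  have := hdeg a; have := hdeg b; have := hdeg c
  omega

lemma steinerLambda_lt_of_adj {d : ℕ} (hab : a ≠ b) (hbc : b ≠ c) (hac : a ≠ c)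
    (hadj : G.Adj a c) (hda : G.degree a ≤ d) (hdb : G.degree b ≤ d) (hdc : G.degree c ≤ d) :
    G.steinerLambda {a, b, c} < d := by
  have ha : a ∈ ({a, b, c} : Set V) := by simp
  have hb : b ∈ ({a, b, c} : Set V) := by simp
  have hc : c ∈ ({a, b, c} : Set V) := by simp
  have hd : 0 < d := ((G.degree_pos_iff_exists_adj a).2 ⟨c, hadj⟩).trans_le hda
  suffices G.steinerLambda {a, b, c} ≤ d - 1 by omega
  refine csSup_le ⟨0, fun i => i.elim0, fun i => i.elim0, fun i => i.elim0⟩ ?_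
  rintro N ⟨T, hT, hdisj⟩
  by_cases huse : ∃ j, (T j).Adj a c
  · obtain ⟨j, hj⟩ := huse
    have := three_mul_card_lt_of_steinerTrees_of_adj hab hbc hac ha hb hc hT
      (fun i j => hdisj i j) hj
    rw [Fintype.card_fin] at this
    omega
  · have := card_lt_degree_of_steinerTrees_of_not_adj hab ha hb hadj hT (fun i j => hdisj i j)
      (not_exists.1 huse)
    rw [Fintype.card_fin] at this
    omega

end

def IsInducedP3OfDegreeTwo (K : SimpleGraph W) [K.LocallyFinite] (p q r : W) : Prop :=
  K.Adj p q ∧ K.Adj q r ∧ p ≠ r ∧ ¬K.Adj p r ∧ K.degree p = 2 ∧ K.degree q = 2 ∧ K.degree r = 2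

lemma pathGraph_isInducedP3OfDegreeTwo {m : ℕ} [(pathGraph m).LocallyFinite] (hm : 5 ≤ m) :
    (pathGraph m).IsInducedP3OfDegreeTwo ⟨1, by omega⟩ ⟨2, by omega⟩ ⟨3, by omega⟩ := by
  have degree (k : ℕ) (h1 : 1 ≤ k) (h2 : k + 1 < m) : (pathGraph m).degree ⟨k, by omega⟩ = 2 := by
    rw [← card_neighborFinset_eq_degree,
      show (pathGraph m).neighborFinset ⟨k, _⟩ = {⟨k - 1, by omega⟩, ⟨k + 1, h2⟩} by
        ext ⟨i, hi⟩; simp [pathGraph_adj]; omega]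
    exact card_pair (by simp)
  refine ⟨?_, ?_, ?_, ?_, degree 1 le_rfl (by omega), degree 2 (by omega) (by omega),
    degree 3 (by omega) (by omega)⟩ <;> simp [pathGraph_adj]

lemma cycleGraph_isInducedP3OfDegreeTwo {m : ℕ} [(cycleGraph m).LocallyFinite] (hm : 4 ≤ m) :
    (cycleGraph m).IsInducedP3OfDegreeTwo ⟨0, by omega⟩ ⟨1, by omega⟩ ⟨2, by omega⟩ := by
  obtain ⟨k, rfl⟩ : ∃ k, m = k + 4 := ⟨m - 4, by omega⟩
  have degree (v : Fin (k + 4)) : (cycleGraph (k + 4)).degree v = 2 := by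
    convert cycleGraph_degree_three_le (n := k + 1) (v := v)
  refine ⟨pathGraph_le_cycleGraph (by simp [pathGraph_adj]),
    pathGraph_le_cycleGraph (by simp [pathGraph_adj]), by simp, ?_, degree _, degree _, degree _⟩
  simp [cycleGraph_adj', Fin.val_neg]

lemma IsInducedP3OfDegreeTwo.of_iso_induce_supp [Fintype V] {H : SimpleGraph V}
    [DecidableRel H.Adj] {C : H.ConnectedComponent} {K : SimpleGraph W} [K.LocallyFinite]
    (φ : H.induce C.supp ≃g K) {p q r : W} (h : K.IsInducedP3OfDegreeTwo p q r) :
    H.IsInducedP3OfDegreeTwo (φ.symm p) (φ.symm q) (φ.symm r) := by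
  classical
  have adj (x y : W) : H.Adj (φ.symm x) (φ.symm y) ↔ K.Adj x y := φ.symm.map_adj_iff
  have degree (x : W) : H.degree (φ.symm x) = K.degree x := by
    rw [← degree_induce_of_neighborSet_subset fun w hw =>
      C.mem_supp_of_adj_mem_supp (φ.symm x).2 hw, ← φ.symm.degree_eq]
  obtain ⟨hpq, hqr, hpr, hnpr, hp, hq, hr⟩ := h
  exact ⟨(adj p q).2 hpq, (adj q r).2 hqr, fun h => hpr (φ.symm.injective (Subtype.ext h)),
    (adj p r).not.2 hnpr, (degree p).trans hp, (degree q).trans hq, (degree r).trans hr⟩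

section

variable [Fintype V] [DecidableEq V] {G : SimpleGraph V} [DecidableRel G.Adj]

lemma degree_eq_card_sub_three_of_degree_compl_eq_two {v : V} (h : Gᶜ.degree v = 2) :
    G.degree v = Fintype.card V - 3 := by
  rw [degree_compl] at h
  have := G.degree_lt_card_verts v
  omega

lemma genEdgeConn_three_lt_of_compl_isInducedP3OfDegreeTwo {a b c : V}
    (h : Gᶜ.IsInducedP3OfDegreeTwo a b c) : G.genEdgeConn 3 < Fintype.card V - 3 := by
  obtain ⟨hab, hbc, hac, hnac, ha, hb, hc⟩ := h
  have hadj : G.Adj a c := by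
    by_contra hnadj
    exact hnac ((compl_adj G a c).2 ⟨hac, hnadj⟩)
  calc G.genEdgeConn 3 ≤ G.steinerLambda {a, b, c} :=
        genEdgeConn_le_steinerLambda (Set.ncard_eq_three.2 ⟨a, b, c, hab.ne, hac, hbc.ne, rfl⟩)
    _ < Fintype.card V - 3 := steinerLambda_lt_of_adj hab.ne hbc.ne hac hadj
        (degree_eq_card_sub_three_of_degree_compl_eq_two ha).le
        (degree_eq_card_sub_three_of_degree_compl_eq_two hb).le
        (degree_eq_card_sub_three_of_degree_compl_eq_two hc).le

lemma isEmpty_compl_induce_supp_iso (hG : G.genEdgeConn 3 = Fintype.card V - 3)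
    (C : Gᶜ.ConnectedComponent) {K : SimpleGraph W} [K.LocallyFinite] {p q r : W}
    (hK : K.IsInducedP3OfDegreeTwo p q r) : IsEmpty (Gᶜ.induce C.supp ≃g K) :=
  ⟨fun φ => (genEdgeConn_three_lt_of_compl_isInducedP3OfDegreeTwo (hK.of_iso_induce_supp φ)).ne hG⟩

end

end SimpleGraph

theorem compl_no_long_path_or_cycle_component_general {V : Type*} [Fintype V]
    (G : SimpleGraph V) (n : ℕ) (hn : Fintype.card V = n)
    (h : G.genEdgeConn 3 = n - 3) :
    ∀ c : Gᶜ.ConnectedComponent, ∀ m : ℕ,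
      (5 ≤ m → IsEmpty (Gᶜ.induce c.supp ≃g SimpleGraph.pathGraph m)) ∧
      (4 ≤ m → IsEmpty (Gᶜ.induce c.supp ≃g SimpleGraph.cycleGraph m)) := by
  classical
  subst hn
  intro c m
  exact ⟨fun hm => isEmpty_compl_induce_supp_iso h c (pathGraph_isInducedP3OfDegreeTwo hm),
    fun hm => isEmpty_compl_induce_supp_iso h c (cycleGraph_isInducedP3OfDegreeTwo hm)⟩

theorem compl_no_long_path_or_cycle_component {V : Type*} [Fintype V]
    (G : SimpleGraph V) (n : ℕ) (hn : Fintype.card V = n) (hG : G.Connected)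
    (h : G.genEdgeConn 3 = n - 3) :
    ∀ c : Gᶜ.ConnectedComponent, ∀ m : ℕ,
      (5 ≤ m → IsEmpty (Gᶜ.induce c.supp ≃g SimpleGraph.pathGraph m)) ∧
      (4 ≤ m → IsEmpty (Gᶜ.induce c.supp ≃g SimpleGraph.cycleGraph m)) :=
  compl_no_long_path_or_cycle_component_general G n hn h
end
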